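/- arXiv:2511.08961 — 7 statements merged into one kernel-verified Lean document; each statement's English description precedes it below -/
import Mathlib

section
/- Let g : [s₀,∞) → ℝ be C², positive, with g, g' > 0 for large s, and suppose the limit 1/q := lim_{s→∞} g(s)g''(s)/(g'(s))² exists with ∫_s^∞ du/g(u) < ∞ for large s. Then q ≥ 1. -/
open Real Filter Set MeasureTheory

/-!
With `H = g g'' / g'²` one has `(g / g')' = 1 - H`. If `1/q > 1`, then `g / g'` eventually
decreases at a linear rate and so becomes negative, which is impossible while `g, g' > 0`.
If `1/q < 0`, then `g'' < 0` eventually, so the concave function `g` lies below one of its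
tangent lines; then `1/g` dominates a multiple of `1/s` and cannot be integrable at infinity.
-/

theorem eventually_differentiableAt_and_deriv_of_contDiffOn_Ici {g : ℝ → ℝ} {s₀ : ℝ}
    (hg : ContDiffOn ℝ 2 g (Ici s₀)) :
    ∀ᶠ x in atTop, DifferentiableAt ℝ g x ∧ DifferentiableAt ℝ (deriv g) x := by
  have hg' : ContDiffOn ℝ 2 g (Ioi s₀) := hg.mono Ioi_subset_Ici_self
  have hdg : ContDiffOn ℝ 1 (deriv g) (Ioi s₀) := hg'.deriv_of_isOpen isOpen_Ioi (by norm_num)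
  filter_upwards [Ioi_mem_atTop s₀] with x hx
  exact ⟨(hg'.differentiableOn (by norm_num)).differentiableAt (Ioi_mem_nhds hx),
    (hdg.differentiableOn (by norm_num)).differentiableAt (Ioi_mem_nhds hx)⟩

theorem le_tangent_of_deriv_deriv_nonpos {g : ℝ → ℝ} {a : ℝ}
    (hd : ∀ x ∈ Ici a, DifferentiableAt ℝ g x ∧ DifferentiableAt ℝ (deriv g) x)
    (hg'' : ∀ x ∈ Ioi a, deriv (deriv g) x ≤ 0) {u : ℝ} (hu : a ≤ u) :
    g u ≤ g a + deriv g a * (u - a) := by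
  have hanti : AntitoneOn (deriv g) (Ici a) :=
    antitoneOn_of_deriv_nonpos (convex_Ici a)
      (fun x hx => (hd x hx).2.continuousAt.continuousWithinAt)
      (fun x hx => (hd x (interior_subset hx)).2.differentiableWithinAt)
      (by simpa only [interior_Ici] using hg'')
  have := (convex_Ici a).image_sub_le_mul_sub_of_deriv_le
    (fun x hx => (hd x hx).1.continuousAt.continuousWithinAt)
    (fun x hx => (hd x (interior_subset hx)).1.differentiableWithinAt)
    (fun x hx => hanti self_mem_Ici (interior_subset hx) (interior_subset hx))
    a self_mem_Ici u hu hu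
  linarith

theorem exists_eventually_le_affine_of_deriv_deriv_nonpos {g : ℝ → ℝ}
    (h : ∀ᶠ x in atTop, (DifferentiableAt ℝ g x ∧ DifferentiableAt ℝ (deriv g) x) ∧
      deriv (deriv g) x ≤ 0) :
    ∃ c d : ℝ, ∀ᶠ x in atTop, g x ≤ c * x + d := by
  obtain ⟨a, ha⟩ := eventually_atTop.1 h
  refine ⟨deriv g a, g a - deriv g a * a, eventually_atTop.2 ⟨a, fun u hu => ?_⟩⟩
  have := le_tangent_of_deriv_deriv_nonpos (fun x hx => (ha x hx).1)
    (fun x hx => (ha x (le_of_lt hx)).2) hu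
  linarith

theorem not_integrableAtFilter_one_div_of_le_affine {g : ℝ → ℝ} {c d : ℝ}
    (hpos : ∀ᶠ x in atTop, 0 < g x) (hle : ∀ᶠ x in atTop, g x ≤ c * x + d) :
    ¬IntegrableAtFilter (fun x => 1 / g x) atTop := by
  intro hint
  have hO : (fun x : ℝ => x⁻¹) =O[atTop] fun x => 1 / g x := by
    refine Asymptotics.IsBigO.of_bound (|c| + |d|) ?_
    filter_upwards [hpos, hle, eventually_ge_atTop 1] with x hgx hgle hx
    have hx0 : 0 < x := by linarith
    have hgK : g x ≤ (|c| + |d|) * x := by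
      nlinarith [le_abs_self c, le_abs_self d, abs_nonneg c, abs_nonneg d]
    rw [norm_inv, norm_of_nonneg hx0.le, norm_of_nonneg (by positivity), inv_eq_one_div,
      mul_one_div, div_le_div_iff₀ hx0 hgx]
    linarith
  obtain ⟨a, ha⟩ := integrableAtFilter_atTop_iff.1 <|
    hO.integrableAtFilter measurable_inv.stronglyMeasurable.stronglyMeasurableAtFilter hint
  exact not_integrableOn_Ici_inv ha

theorem hasDerivAt_div_deriv {g : ℝ → ℝ} {x : ℝ} (hg : DifferentiableAt ℝ g x)
    (hg' : DifferentiableAt ℝ (deriv g) x) (hx : deriv g x ≠ 0) :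
    HasDerivAt (fun y => g y / deriv g y) (1 - g x * deriv (deriv g) x / deriv g x ^ 2) x := by
  refine (hg.hasDerivAt.div hg'.hasDerivAt hx).congr_deriv ?_
  field_simp

theorem tendsto_atBot_of_hasDerivAt_le_neg {f f' : ℝ → ℝ} {ε : ℝ} (hε : 0 < ε)
    (h : ∀ᶠ x in atTop, HasDerivAt f (f' x) x ∧ f' x ≤ -ε) :
    Tendsto f atTop atBot := by
  obtain ⟨a, ha⟩ := eventually_atTop.1 h
  have hlin : ∀ u ∈ Ici a, f u - f a ≤ -ε * (u - a) :=
    fun u hu => (convex_Ici a).image_sub_le_mul_sub_of_deriv_le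
      (fun x hx => (ha x hx).1.continuousAt.continuousWithinAt)
      (fun x hx => (ha x (interior_subset hx)).1.differentiableAt.differentiableWithinAt)
      (fun x hx => (ha x (interior_subset hx)).1.deriv ▸ (ha x (interior_subset hx)).2)
      a self_mem_Ici u hu hu
  refine tendsto_atBot_mono' _ (eventually_atTop.2 ⟨a, fun u hu => ?_⟩)
    (tendsto_atBot_add_const_left _ (f a + ε * a)
      (tendsto_id.const_mul_atTop_of_neg (neg_lt_zero.2 hε)))
  show f u ≤ f a + ε * a + -ε * u
  linarith [hlin u hu]

/-- Under (G1) (with C² regularity, positivity, eventual positivity of g',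
integrability of 1/g at infinity, and existence of the limit
1/q = lim g·g''/(g')²), one has q ≥ 1. -/
theorem stmt_0 (g : ℝ → ℝ) (s₀ q : ℝ) (hq : q ≠ 0)
    (hC2 : ContDiffOn ℝ 2 g (Ici s₀))
    (hgpos : ∀ s ∈ Ici s₀, 0 < g s)
    (hg' : ∀ᶠ s in atTop, 0 < deriv g s)
    (hint : ∀ᶠ s in atTop, IntegrableOn (fun u => 1 / g u) (Ici s))
    (hlim : Tendsto (fun s => g s * deriv (deriv g) s / (deriv g s) ^ 2)
      atTop (nhds (1 / q))) :
    1 ≤ q := by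
  by_contra! hq1
  have hdiff := eventually_differentiableAt_and_deriv_of_contDiffOn_Ici hC2
  have hg : ∀ᶠ s in atTop, 0 < g s := eventually_atTop.2 ⟨s₀, hgpos⟩
  rcases hq.lt_or_gt with hneg | hpos
  · have hH := hlim.eventually (eventually_lt_nhds (one_div_neg.2 hneg))
    obtain ⟨c, d, hcd⟩ := exists_eventually_le_affine_of_deriv_deriv_nonpos <| by
      filter_upwards [hdiff, hg, hH] with x hdx hgx hHx
      exact ⟨hdx, (neg_of_mul_neg_right (neg_of_div_neg_left hHx (sq_nonneg _)) hgx.le).le⟩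
    exact not_integrableAtFilter_one_div_of_le_affine hg hcd
      (integrableAtFilter_atTop_iff.2 hint.exists)
  · set ε := (1 / q - 1) / 2 with hε_def
    have hε : 0 < ε := by linarith [one_lt_one_div hpos hq1]
    have hH := hlim.eventually (eventually_gt_nhds (show 1 + ε < 1 / q by linarith))
    have hbot : Tendsto (fun s => g s / deriv g s) atTop atBot :=
      tendsto_atBot_of_hasDerivAt_le_neg hε <| by
        filter_upwards [hdiff, hg', hH] with x hdx hg'x hHx
        exact ⟨hasDerivAt_div_deriv hdx.1 hdx.2 hg'x.ne', by linarith⟩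
    obtain ⟨x, hneg, hpos⟩ :=
      ((hbot.eventually (eventually_lt_atBot 0)).and (hg.and hg')).exists
    exact hneg.not_gt (div_pos hpos.1 hpos.2)
end

section
/- Let g satisfy (G1) with limit 1/q. Then g is strictly increasing and convex for all sufficiently large s, and g(s) → ∞ as s → ∞. -/
open Real Filter Set MeasureTheory

/-! Since `g > 0`, `g''` has the sign of `H = g g'' / g'²`, hence eventually the sign of `1/q`.
A positive `g` bounded above by an affine function has `1/g ≳ 1/u`, which is not integrable at
infinity. This rules out `1/q < 0`, where `g` would be eventually concave. So `g` is convex on some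
`[B, ∞)`; by the same argument it is not bounded by `g B`, so `g B < g y` for some `y > B`, and
convexity makes `g` strictly increasing beyond `y` with at least linear growth. -/

lemma not_integrableOn_Ici_of_inv_isBigO {E : Type*} [NormedAddCommGroup E] {f : ℝ → E}
    (hf : (fun x : ℝ => x⁻¹) =O[atTop] f) (S : ℝ) : ¬ IntegrableOn f (Ici S) := by
  refine not_integrableOn_of_tendsto_norm_atTop_of_deriv_isBigO_filter (f := Real.log) atTop
    (Ici_mem_atTop S) ?_ ?_ (by rwa [Real.deriv_log'])
  · filter_upwards [eventually_gt_atTop 0] with x hx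
    exact Real.differentiableAt_log hx.ne'
  · exact tendsto_abs_atTop_atTop.comp Real.tendsto_log_atTop

lemma inv_isBigO_one_div_of_le_affine {g : ℝ → ℝ} {a b : ℝ}
    (hpos : ∀ᶠ x in atTop, 0 < g x) (hle : ∀ᶠ x in atTop, g x ≤ a + b * x) :
    (fun x : ℝ => x⁻¹) =O[atTop] (fun x => 1 / g x) := by
  refine Asymptotics.IsBigO.of_bound (|a| + |b|) ?_
  filter_upwards [hpos, hle, eventually_ge_atTop 1] with x hgx hlex hx
  have hx0 : 0 < x := one_pos.trans_le hx
  rw [Real.norm_of_nonneg (inv_pos.mpr hx0).le, Real.norm_of_nonneg (one_div_pos.mpr hgx).le,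
    mul_one_div, le_div_iff₀ hgx, inv_mul_le_iff₀ hx0]
  nlinarith [le_abs_self a, le_abs_self b, abs_nonneg a, abs_nonneg b]

lemma ConcaveOn.exists_eventually_le_affine {g : ℝ → ℝ} {S : ℝ}
    (hg : ConcaveOn ℝ (Ici S) g) :
    ∃ a b : ℝ, ∀ᶠ x in atTop, g x ≤ a + b * x := by
  set m := g (S + 1) - g S
  refine ⟨g (S + 1) - m * (S + 1), m, ?_⟩
  filter_upwards [eventually_gt_atTop (S + 1)] with x hx
  have hslope := hg.slope_anti_adjacent self_mem_Ici (mem_Ici.mpr (by linarith))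
    (lt_add_one S) hx
  rw [add_sub_cancel_left, div_one, div_le_iff₀ (sub_pos.mpr hx)] at hslope
  linarith

lemma ConvexOn.tendsto_atTop_of_lt {g : ℝ → ℝ} {S x y : ℝ} (hg : ConvexOn ℝ (Ici S) g)
    (hx : x ∈ Ici S) (hxy : x < y) (hlt : g x < g y) : Tendsto g atTop atTop := by
  set m := (g y - g x) / (y - x)
  have hm : 0 < m := div_pos (sub_pos.mpr hlt) (sub_pos.mpr hxy)
  have hlow : ∀ᶠ z in atTop, g y + m * (z - y) ≤ g z := by
    filter_upwards [eventually_gt_atTop y] with z hz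
    have hslope := hg.slope_mono_adjacent hx (mem_Ici.mpr (by linarith [mem_Ici.mp hx])) hxy hz
    rw [le_div_iff₀ (sub_pos.mpr hz)] at hslope
    linarith
  refine tendsto_atTop_mono' atTop hlow (tendsto_atTop_add_const_left _ _ ?_)
  exact (tendsto_atTop_add_const_right _ _ tendsto_id).const_mul_atTop hm

lemma pos_of_mul_div_sq_pos {a b c : ℝ} (ha : 0 < a) (h : 0 < a * b / c ^ 2) : 0 < b := by
  by_contra! hb
  exact h.not_ge (div_nonpos_of_nonpos_of_nonneg (mul_nonpos_of_nonneg_of_nonpos ha.le hb)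
    (sq_nonneg c))

lemma neg_of_mul_div_sq_neg {a b c : ℝ} (ha : 0 < a) (h : a * b / c ^ 2 < 0) : b < 0 := by
  by_contra! hb
  exact h.not_ge (by positivity)

lemma eventually_deriv2_pos_of_tendsto {g : ℝ → ℝ} {s₀ q : ℝ} (hq : q ≠ 0)
    (hcont : ContinuousOn g (Ici s₀)) (hgpos : ∀ s ∈ Ici s₀, 0 < g s)
    (hsuperlinear : ∀ a b : ℝ, ¬ ∀ᶠ x in atTop, g x ≤ a + b * x)
    (hlim : Tendsto (fun s => g s * deriv (deriv g) s / (deriv g s) ^ 2) atTop (nhds (1 / q))) :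
    ∀ᶠ x in atTop, 0 < deriv (deriv g) x := by
  rcases (one_div_ne_zero hq).lt_or_gt with hneg | hpos
  · obtain ⟨B, hB⟩ := eventually_atTop.mp
      ((hlim.eventually (eventually_lt_nhds hneg)).and (eventually_ge_atTop s₀))
    have hconc : StrictConcaveOn ℝ (Ici B) g :=
      strictConcaveOn_of_deriv2_neg' (convex_Ici B)
        (hcont.mono (Ici_subset_Ici.mpr (hB B le_rfl).2))
        fun x hx => neg_of_mul_div_sq_neg (hgpos x (hB x hx).2) (hB x hx).1
    obtain ⟨a, b, hle⟩ := hconc.concaveOn.exists_eventually_le_affine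
    exact (hsuperlinear a b hle).elim
  · filter_upwards [hlim.eventually (eventually_gt_nhds hpos), eventually_ge_atTop s₀]
      with x hH hx
    exact pos_of_mul_div_sq_pos (hgpos x hx) hH

/-- Under (G1), g is strictly increasing and convex for all
sufficiently large s, and g(s) → ∞ as s → ∞. -/
theorem stmt_1 (g : ℝ → ℝ) (s₀ q : ℝ) (hq : q ≠ 0)
    (hC2 : ContDiffOn ℝ 2 g (Ici s₀))
    (hgpos : ∀ s ∈ Ici s₀, 0 < g s)
    (hint : ∀ᶠ s in atTop, IntegrableOn (fun u => 1 / g u) (Ici s))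
    (hlim : Tendsto (fun s => g s * deriv (deriv g) s / (deriv g s) ^ 2)
      atTop (nhds (1 / q))) :
    ∃ s₁, StrictMonoOn g (Ici s₁) ∧ ConvexOn ℝ (Ici s₁) g ∧
      Tendsto g atTop atTop := by
  have hcont : ContinuousOn g (Ici s₀) := hC2.continuousOn
  obtain ⟨S, hS⟩ := hint.exists
  have hsuperlinear (a b : ℝ) : ¬ ∀ᶠ x in atTop, g x ≤ a + b * x := fun hle =>
    not_integrableOn_Ici_of_inv_isBigO
      (inv_isBigO_one_div_of_le_affine ((eventually_ge_atTop s₀).mono hgpos) hle) S hS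
  obtain ⟨B, hB⟩ := eventually_atTop.mp
    ((eventually_deriv2_pos_of_tendsto hq hcont hgpos hsuperlinear hlim).and
      (eventually_ge_atTop s₀))
  have hconv : ConvexOn ℝ (Ici B) g :=
    (strictConvexOn_of_deriv2_pos' (convex_Ici B)
      (hcont.mono (Ici_subset_Ici.mpr (hB B le_rfl).2)) fun x hx => (hB x hx).1).convexOn
  obtain ⟨y, hlt, hBy⟩ : ∃ y, g B < g y ∧ B < y := by
    have hunbounded := hsuperlinear (g B) 0
    simp only [zero_mul, add_zero, not_eventually, not_le] at hunbounded
    exact (hunbounded.and_eventually (eventually_gt_atTop B)).exists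
  refine ⟨y, ?_, hconv.subset (Ici_subset_Ici.mpr hBy.le) (convex_Ici y),
    hconv.tendsto_atTop_of_lt self_mem_Ici hBy hlt⟩
  simpa [Ici_inter_Ici, max_eq_right hBy.le] using hconv.strictMonoOn self_mem_Ici hBy hlt
end

section
/- Assume g satisfies (G1) with limit 1/q. Then lim_{s→∞} g(s)/(s g'(s)) = 1 - 1/q. -/
/-!
By the quotient rule, `(g / g')' = 1 - H`, which tends to `1 - 1/q`. A function whose derivative
tends to `c` is `c s + o(s)` by the mean value theorem, so `g / (s g') = (g / g')(s) / s → 1 - 1/q`.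
-/

open Filter Topology Asymptotics Set MeasureTheory

theorem isLittleO_id_of_tendsto_deriv_zero {E : Type*} [NormedAddCommGroup E] [NormedSpace ℝ E]
    {f f' : ℝ → E} (hf : ∀ᶠ x in atTop, HasDerivAt f (f' x) x)
    (hf' : Tendsto f' atTop (𝓝 0)) : f =o[atTop] id := by
  refine isLittleO_iff.2 fun ε hε => ?_
  have hsmall : ∀ᶠ x in atTop, ‖f' x‖ ≤ ε / 2 :=
    (tendsto_zero_iff_norm_tendsto_zero.1 hf').eventually (eventually_le_nhds (half_pos hε))
  obtain ⟨b, hb⟩ := ((eventually_ge_atTop 0).and (hf.and hsmall)).exists_forall_of_atTop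
  have hmvt : ∀ x ≥ b, ‖f x - f b‖ ≤ ε / 2 * ‖x - b‖ := fun x hx =>
    (convex_Ici b).norm_image_sub_le_of_norm_hasDerivWithin_le
      (fun y hy => (hb y hy).2.1.hasDerivWithinAt) (fun y hy => (hb y hy).2.2) self_mem_Ici hx
  filter_upwards [eventually_ge_atTop b, eventually_ge_atTop (2 * ‖f b‖ / ε)] with x hxb hxf
  have hb0 := (hb b le_rfl).1
  have hfb : ‖f b‖ ≤ ε / 2 * x := by
    rw [div_le_iff₀ hε] at hxf; linarith
  calc ‖f x‖ ≤ ‖f x - f b‖ + ‖f b‖ := norm_le_norm_sub_add _ _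
    _ ≤ ε / 2 * (x - b) + ε / 2 * x := by
      gcongr
      simpa [Real.norm_eq_abs, abs_of_nonneg (sub_nonneg.2 hxb)] using hmvt x hxb
    _ ≤ ε * ‖id x‖ := by
      rw [id, Real.norm_eq_abs, abs_of_nonneg (hb0.trans hxb)]; nlinarith

theorem tendsto_div_id_of_tendsto_deriv {f f' : ℝ → ℝ} {c : ℝ}
    (hf : ∀ᶠ x in atTop, HasDerivAt f (f' x) x) (hf' : Tendsto f' atTop (𝓝 c)) :
    Tendsto (fun x => f x / x) atTop (𝓝 c) := by
  have hlin : (fun x => f x - c * x) =o[atTop] id := by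
    refine isLittleO_id_of_tendsto_deriv_zero (f' := fun x => f' x - c) ?_ ?_
    · exact hf.mono fun x hx => (hx.sub ((hasDerivAt_id' x).const_mul c)).congr_deriv (by ring)
    · simpa using hf'.sub_const c
  have hdiv := hlin.tendsto_div_nhds_zero.add_const c
  rw [zero_add] at hdiv
  refine hdiv.congr' ?_
  filter_upwards [eventually_ne_atTop 0] with x hx
  simp only [id]
  field_simp
  ring

theorem HasDerivAt.div_deriv {f f' : ℝ → ℝ} {f'' x : ℝ} (hf : HasDerivAt f (f' x) x)
    (hf' : HasDerivAt f' f'' x) (hne : f' x ≠ 0) :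
    HasDerivAt (fun y => f y / f' y) (1 - f x * f'' / f' x ^ 2) x :=
  (hf.div hf' hne).congr_deriv (by field_simp)

theorem ContDiffOn.hasDerivAt_deriv_deriv {g : ℝ → ℝ} {U : Set ℝ}
    (hg : ContDiffOn ℝ 2 g U) (hU : IsOpen U) {x : ℝ} (hx : x ∈ U) :
    HasDerivAt g (deriv g x) x ∧ HasDerivAt (deriv g) (deriv (deriv g) x) x :=
  ⟨((hg.contDiffAt (hU.mem_nhds hx)).differentiableAt two_ne_zero).hasDerivAt,
    (((hg.deriv_of_isOpen hU (by norm_num : (1 : WithTop ℕ∞) + 1 ≤ 2)).contDiffAt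
      (hU.mem_nhds hx)).differentiableAt one_ne_zero).hasDerivAt⟩

theorem stmt_2_general (g : ℝ → ℝ) (s₀ q : ℝ) (hq : 1 ≤ q)
    (hC2 : ContDiffOn ℝ 2 g (Ici s₀))
    (hlim : Tendsto (fun s => g s * deriv (deriv g) s / (deriv g s) ^ 2)
      atTop (nhds (1 / q))) :
    Tendsto (fun s => g s / (s * deriv g s)) atTop (nhds (1 - 1 / q)) := by
  -- `H s = 0` wherever `g' s = 0` (division by zero), so `H → 1/q ≠ 0` keeps `g'` away from zero.
  have hderiv_ne : ∀ᶠ s in atTop, deriv g s ≠ 0 :=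
    (hlim.eventually_ne (by positivity : 1 / q ≠ 0)).mono fun s hs h => hs (by simp [h])
  have hratio : ∀ᶠ s in atTop, HasDerivAt (fun s => g s / deriv g s)
      (1 - g s * deriv (deriv g) s / deriv g s ^ 2) s := by
    filter_upwards [eventually_gt_atTop s₀, hderiv_ne] with s hs hne
    obtain ⟨hg, hg'⟩ :=
      (hC2.mono Ioi_subset_Ici_self).hasDerivAt_deriv_deriv isOpen_Ioi (mem_Ioi.2 hs)
    exact hg.div_deriv hg' hne
  simpa only [div_div, mul_comm] using
    tendsto_div_id_of_tendsto_deriv hratio (tendsto_const_nhds.sub hlim)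

/-- Under (G1), g(s)/(s·g'(s)) → 1 - 1/q as s → ∞. -/
theorem stmt_2 (g : ℝ → ℝ) (s₀ q : ℝ) (hq : 1 ≤ q)
    (hC2 : ContDiffOn ℝ 2 g (Ici s₀))
    (hgpos : ∀ s ∈ Ici s₀, 0 < g s)
    (hint : ∀ᶠ s in atTop, IntegrableOn (fun u => 1 / g u) (Ici s))
    (hlim : Tendsto (fun s => g s * deriv (deriv g) s / (deriv g s) ^ 2)
      atTop (nhds (1 / q))) :
    Tendsto (fun s => g s / (s * deriv g s)) atTop (nhds (1 - 1 / q)) :=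
  stmt_2_general g s₀ q hq hC2 hlim
end

section
/- Assume g satisfies (G1) with limit 1/q. Then lim_{s→∞} (log s)/(log g(s)) = 1 - 1/q. -/
/-! The quotient `H` is eventually positive, so `g` is eventually convex; as `1 / g` is integrable
on a tail, `g` cannot be eventually nonincreasing, hence `g' > 0` and `g → ∞`. Since
`(g / g')' = 1 - H → 1 - 1/q`, the ∞/∞ L'Hôpital rule gives `g / (s g') → 1 - 1/q`, and
`g / (s g')` is exactly the ratio of the derivatives of `log s` and `log g(s)`: a second
application of the rule concludes. -/

open Real Filter Set MeasureTheory Topology Asymptotics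

section Monotonicity

variable {f f' : ℝ → ℝ} {a : ℝ}

lemma monotoneOn_Ici_of_hasDerivAt_nonneg (hf : ∀ x ∈ Ici a, HasDerivAt f (f' x) x)
    (hf' : ∀ x ∈ Ici a, 0 ≤ f' x) : MonotoneOn f (Ici a) :=
  monotoneOn_of_hasDerivWithinAt_nonneg (convex_Ici a)
    (fun x hx => (hf x hx).continuousAt.continuousWithinAt)
    (fun x hx => (hf x (interior_subset hx)).hasDerivWithinAt)
    fun x hx => hf' x (interior_subset hx)

lemma antitoneOn_Ici_of_hasDerivAt_nonpos (hf : ∀ x ∈ Ici a, HasDerivAt f (f' x) x)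
    (hf' : ∀ x ∈ Ici a, f' x ≤ 0) : AntitoneOn f (Ici a) :=
  antitoneOn_of_hasDerivWithinAt_nonpos (convex_Ici a)
    (fun x hx => (hf x hx).continuousAt.continuousWithinAt)
    (fun x hx => (hf x (interior_subset hx)).hasDerivWithinAt)
    fun x hx => hf' x (interior_subset hx)

lemma abs_sub_le_sub_of_abs_deriv_le {G G' : ℝ → ℝ} (hf : ∀ x ∈ Ici a, HasDerivAt f (f' x) x)
    (hG : ∀ x ∈ Ici a, HasDerivAt G (G' x) x) (hle : ∀ x ∈ Ici a, |f' x| ≤ G' x) :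
    ∀ x ∈ Ici a, |f x - f a| ≤ G x - G a := by
  intro x hx
  have hsub := monotoneOn_Ici_of_hasDerivAt_nonneg (fun y hy => (hG y hy).sub (hf y hy))
    fun y hy => sub_nonneg.2 ((le_abs_self _).trans (hle y hy))
  have hadd := monotoneOn_Ici_of_hasDerivAt_nonneg (fun y hy => (hG y hy).add (hf y hy))
    fun y hy => by linarith [neg_abs_le (f' y), hle y hy]
  have h₁ : G a - f a ≤ G x - f x := hsub self_mem_Ici hx hx
  have h₂ : G a + f a ≤ G x + f x := hadd self_mem_Ici hx hx
  rw [abs_sub_le_iff]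
  constructor <;> linarith

lemma tendsto_atTop_of_hasDerivAt_of_le_deriv (hf : ∀ x ∈ Ici a, HasDerivAt f (f' x) x)
    {c : ℝ} (hc : 0 < c) (hle : ∀ x ∈ Ici a, c ≤ f' x) : Tendsto f atTop atTop := by
  have hmono := monotoneOn_Ici_of_hasDerivAt_nonneg
    (fun x hx => (hf x hx).sub ((hasDerivAt_id x).const_mul c))
    fun x hx => by simpa using hle x hx
  refine tendsto_atTop_mono' _ ?_
    (((tendsto_id.const_mul_atTop hc).atTop_add (tendsto_const_nhds (x := f a - c * a))))
  filter_upwards [eventually_ge_atTop a] with x hx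
  have : f a - c * a ≤ f x - c * x := hmono self_mem_Ici hx hx
  simp only [id]
  linarith

end Monotonicity

theorem HasDerivAt.lhopital_atTop_of_tendsto_atTop {f f' G G' : ℝ → ℝ} {L : ℝ}
    (hf : ∀ᶠ x in atTop, HasDerivAt f (f' x) x) (hG : ∀ᶠ x in atTop, HasDerivAt G (G' x) x)
    (hG' : ∀ᶠ x in atTop, 0 < G' x) (hGtop : Tendsto G atTop atTop)
    (hlim : Tendsto (fun x => f' x / G' x) atTop (𝓝 L)) :
    Tendsto (fun x => f x / G x) atTop (𝓝 L) := by
  suffices h : (fun x => f x - L * G x) =o[atTop] G by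
    refine (zero_add L ▸ h.tendsto_div_nhds_zero.add_const L).congr' ?_
    filter_upwards [hGtop.eventually_gt_atTop 0] with x hx
    field_simp
    ring
  refine isLittleO_iff.2 fun ε hε => ?_
  have hclose : ∀ᶠ x in atTop, |f' x / G' x - L| < ε / 2 :=
    (Metric.tendsto_nhds.1 hlim) (ε / 2) (by positivity)
  obtain ⟨a, ha⟩ := eventually_atTop.1 (hf.and (hG.and (hG'.and hclose)))
  have hderiv : ∀ x ∈ Ici a, |f' x - L * G' x| ≤ ε / 2 * G' x := fun x hx => by
    obtain ⟨-, -, hpos, hx⟩ := ha x hx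
    rw [show f' x - L * G' x = (f' x / G' x - L) * G' x by field_simp, abs_mul,
      abs_of_pos hpos]
    exact mul_le_mul_of_nonneg_right hx.le hpos.le
  have hbound : ∀ x ∈ Ici a, |f x - L * G x - (f a - L * G a)| ≤ ε / 2 * G x - ε / 2 * G a :=
    abs_sub_le_sub_of_abs_deriv_le (fun x hx => (ha x hx).1.sub ((ha x hx).2.1.const_mul L))
      (fun x hx => (ha x hx).2.1.const_mul (ε / 2)) hderiv
  filter_upwards [eventually_ge_atTop a, hGtop.eventually_ge_atTop 0,
    (hGtop.const_mul_atTop (half_pos hε)).eventually_ge_atTop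
      (|f a - L * G a| - ε / 2 * G a)] with x hxa hGx hlarge
  have := hbound x hxa
  rw [Real.norm_eq_abs, Real.norm_eq_abs, abs_of_nonneg hGx]
  linarith [abs_sub_abs_le_abs_sub (f x - L * G x) (f a - L * G a)]

lemma not_integrableOn_Ici_one_div_of_antitoneOn {g : ℝ → ℝ} {b : ℝ}
    (hanti : AntitoneOn g (Ici b)) (hpos : ∀ x ∈ Ici b, 0 < g x) :
    ¬ IntegrableOn (fun u => 1 / g u) (Ici b) := by
  intro hint
  have hconst : IntegrableOn (fun _ => 1 / g b) (Ici b) := by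
    refine Integrable.mono hint aestronglyMeasurable_const
      ((ae_restrict_iff' measurableSet_Ici).2 ?_)
    filter_upwards with x hx
    have hgx := hpos x hx
    rw [Real.norm_eq_abs, Real.norm_eq_abs, abs_of_pos (one_div_pos.2 hgx),
      abs_of_pos (one_div_pos.2 (hpos b self_mem_Ici))]
    exact one_div_le_one_div_of_le hgx (hanti self_mem_Ici hx hx)
  rcases (integrableOn_const_iff (C := 1 / g b)).1 hconst with h | h
  · simp [(hpos b self_mem_Ici).ne'] at h
  · simp at h

lemma eventually_deriv_pos_and_tendsto_atTop {g g' g'' : ℝ → ℝ}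
    (hg : ∀ᶠ x in atTop, HasDerivAt g (g' x) x) (hg' : ∀ᶠ x in atTop, HasDerivAt g' (g'' x) x)
    (hg'' : ∀ᶠ x in atTop, 0 ≤ g'' x) (hpos : ∀ᶠ x in atTop, 0 < g x)
    (hint : ∀ᶠ x in atTop, IntegrableOn (fun u => 1 / g u) (Ici x)) :
    (∀ᶠ x in atTop, 0 < g' x) ∧ Tendsto g atTop atTop := by
  obtain ⟨a, ha⟩ := eventually_atTop.1 (hg.and (hg'.and (hg''.and (hpos.and hint))))
  have hmono : MonotoneOn g' (Ici a) :=
    monotoneOn_Ici_of_hasDerivAt_nonneg (fun x hx => (ha x hx).2.1) fun x hx => (ha x hx).2.2.1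
  by_cases h : ∃ b ∈ Ici a, 0 < g' b
  · obtain ⟨b, hab, hb⟩ := h
    have hle : ∀ x ∈ Ici b, g' b ≤ g' x := fun x hx => hmono hab (Ici_subset_Ici.2 hab hx) hx
    exact ⟨eventually_atTop.2 ⟨b, fun x hx => hb.trans_le (hle x hx)⟩,
      tendsto_atTop_of_hasDerivAt_of_le_deriv
        (fun x hx => (ha x (Ici_subset_Ici.2 hab hx)).1) hb hle⟩
  · simp only [not_exists, not_and, not_lt] at h
    exact absurd (ha a le_rfl).2.2.2.2 (not_integrableOn_Ici_one_div_of_antitoneOn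
      (antitoneOn_Ici_of_hasDerivAt_nonpos (fun x hx => (ha x hx).1) h)
      fun x hx => (ha x hx).2.2.2.1)

lemma eventually_hasDerivAt_deriv_of_contDiffOn_Ici {g : ℝ → ℝ} {s₀ : ℝ}
    (h : ContDiffOn ℝ 2 g (Ici s₀)) :
    ∀ᶠ x in atTop, HasDerivAt g (deriv g x) x ∧ HasDerivAt (deriv g) (deriv (deriv g) x) x := by
  have hopen : ContDiffOn ℝ 2 g (Ioi s₀) := h.mono Ioi_subset_Ici_self
  have hderiv : ContDiffOn ℝ 1 (deriv g) (Ioi s₀) :=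
    hopen.deriv_of_isOpen isOpen_Ioi (by norm_num)
  filter_upwards [eventually_gt_atTop s₀] with x hx
  have hnhds : Ioi s₀ ∈ 𝓝 x := isOpen_Ioi.mem_nhds hx
  exact ⟨((hopen.differentiableOn (by norm_num)).differentiableAt hnhds).hasDerivAt,
    ((hderiv.differentiableOn (by norm_num)).differentiableAt hnhds).hasDerivAt⟩

/-- Under (G1), (log s)/(log g(s)) → 1 - 1/q as s → ∞. -/
theorem stmt_3 (g : ℝ → ℝ) (s₀ q : ℝ) (hq : 1 ≤ q)
    (hC2 : ContDiffOn ℝ 2 g (Ici s₀))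
    (hgpos : ∀ s ∈ Ici s₀, 0 < g s)
    (hint : ∀ᶠ s in atTop, IntegrableOn (fun u => 1 / g u) (Ici s))
    (hlim : Tendsto (fun s => g s * deriv (deriv g) s / (deriv g s) ^ 2)
      atTop (nhds (1 / q))) :
    Tendsto (fun s => Real.log s / Real.log (g s)) atTop (nhds (1 - 1 / q)) := by
  have hgpos' : ∀ᶠ s in atTop, 0 < g s := eventually_atTop.2 ⟨s₀, hgpos⟩
  have hderiv := eventually_hasDerivAt_deriv_of_contDiffOn_Ici hC2
  have hconvex : ∀ᶠ s in atTop, 0 ≤ deriv (deriv g) s := by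
    filter_upwards [hlim.eventually (eventually_gt_nhds (by positivity)), hgpos'] with s hH hg
    by_contra! h
    exact hH.not_ge (div_nonpos_of_nonpos_of_nonneg
      (mul_nonpos_of_nonneg_of_nonpos hg.le h.le) (sq_nonneg _))
  obtain ⟨hg'pos, hgtop⟩ := eventually_deriv_pos_and_tendsto_atTop
    (hderiv.mono fun _ h => h.1) (hderiv.mono fun _ h => h.2) hconvex hgpos' hint
  have hratio : Tendsto (fun s => g s / deriv g s / s) atTop (𝓝 (1 - 1 / q)) := by
    refine HasDerivAt.lhopital_atTop_of_tendsto_atTop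
      (f' := fun s => 1 - g s * deriv (deriv g) s / deriv g s ^ 2) (G' := fun _ => 1) ?_
      (.of_forall hasDerivAt_id) (.of_forall fun _ => one_pos) tendsto_id
      (by simpa using tendsto_const_nhds.sub hlim)
    filter_upwards [hderiv, hg'pos] with s ⟨h₁, h₂⟩ hs
    refine (h₁.fun_div h₂ hs.ne').congr_deriv ?_
    field_simp
  refine HasDerivAt.lhopital_atTop_of_tendsto_atTop (f' := fun s => s⁻¹)
    (G' := fun s => deriv g s / g s) ?_ ?_ ?_ (tendsto_log_atTop.comp hgtop) (hratio.congr' ?_)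
  · filter_upwards [eventually_gt_atTop 0] with s hs using Real.hasDerivAt_log hs.ne'
  · filter_upwards [hderiv, hgpos'] with s h hs using h.1.log hs.ne'
  · filter_upwards [hg'pos, hgpos'] with s h₁ h₂ using div_pos h₁ h₂
  · filter_upwards [hg'pos, hgpos', eventually_gt_atTop 0] with s h₁ h₂ hs
    show g s / deriv g s / s = s⁻¹ / (deriv g s / g s)
    field_simp
end

section
/- Under (G1)-(G2), the function F(s) := ∫_s^∞ dt/f(t) with f = e^g satisfies F(s) = (1/(f(s)g'(s)))·(1 - (1+o(1)) H(s)/g(s)) as s → ∞. In particular f'(s)·F(s) → 1. -/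
/-!
With `φ = g''/g'² = H/g` one has `(e^{-g}/g')' = -e^{-g}(1 + φ)`, so integrating over `[s, ∞)`
gives `F(s) = e^{-g(s)}/g'(s) - ∫_s^∞ e^{-g} φ`. Since `H → 1/q > 0`, `g` is eventually convex,
hence at least linear, so `g → ∞` and all boundary terms vanish. The bound on `H'` makes `φ`
Lipschitz in the variable `g` with constant `O(1/g(s)²)`, and because `g'` is increasing,
`∫_s^∞ e^{-g}(g - g(s)) ≤ g'(s)⁻¹ ∫_s^∞ e^{-g}(g - g(s)) g' = e^{-g(s)}/g'(s)`. Replacing `φ(t)`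
by `φ(s)` in the integral therefore shows that `P = f g' F` satisfies
`1 - P = (H/g) P + O(1/g²)`, from which both `P → 1` and the expansion of `F` follow.
-/

open Real Filter Set MeasureTheory Topology

namespace ExpNegTail

noncomputable def H (g : ℝ → ℝ) (s : ℝ) : ℝ := g s * deriv (deriv g) s / deriv g s ^ 2

noncomputable def phi (g : ℝ → ℝ) (s : ℝ) : ℝ := deriv (deriv g) s / deriv g s ^ 2

theorem hasDerivAt_neg_exp_neg_div_deriv {g : ℝ → ℝ} {x : ℝ} (hg : DifferentiableAt ℝ g x)
    (hg' : DifferentiableAt ℝ (deriv g) x) (hne : deriv g x ≠ 0) :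
    HasDerivAt (fun t => -(exp (-g t) / deriv g t)) (exp (-g x) * (1 + phi g x)) x := by
  refine ((hg.hasDerivAt.neg.exp).div hg'.hasDerivAt hne).neg.congr_deriv ?_
  simp only [phi, Pi.neg_apply]
  field_simp
  ring

theorem hasDerivAt_neg_sub_add_one_mul_exp_neg {g : ℝ → ℝ} {x : ℝ} (c : ℝ)
    (hg : DifferentiableAt ℝ g x) :
    HasDerivAt (fun t => -((g t - c + 1) * exp (-g t)))
      (exp (-g x) * (g x - c) * deriv g x) x := by
  refine (((hg.hasDerivAt.sub_const c).add_const 1).mul hg.hasDerivAt.neg.exp).neg.congr_deriv ?_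
  simp only [Pi.neg_apply]
  ring

theorem tendsto_sub_add_one_mul_exp_neg {g : ℝ → ℝ} (hg : Tendsto g atTop atTop) (c : ℝ) :
    Tendsto (fun t => (g t - c + 1) * exp (-g t)) atTop (𝓝 0) := by
  have h : Tendsto (fun x => x * exp (-x) + (1 - c) * exp (-x)) atTop (𝓝 0) := by
    simpa using (tendsto_pow_mul_exp_neg_atTop_nhds_zero 1).add
      (tendsto_exp_neg_atTop_nhds_zero.const_mul (1 - c))
  exact (h.comp hg).congr fun t => by simp only [Function.comp]; ring

theorem monotoneOn_Ici_of_deriv_nonneg {f : ℝ → ℝ} {a : ℝ}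
    (hf : ∀ x ∈ Ici a, DifferentiableAt ℝ f x) (hf' : ∀ x ∈ Ioi a, 0 ≤ deriv f x) :
    MonotoneOn f (Ici a) :=
  monotoneOn_of_deriv_nonneg (convex_Ici a)
    (fun x hx => (hf x hx).continuousAt.continuousWithinAt)
    (by rw [interior_Ici]; exact fun x hx => (hf x (mem_Ici_of_Ioi hx)).differentiableWithinAt)
    (by rwa [interior_Ici])

theorem abs_sub_le_sub_of_abs_deriv_le {f B : ℝ → ℝ} {a b : ℝ} (hab : a ≤ b)
    (hf : ∀ x ∈ Icc a b, DifferentiableAt ℝ f x) (hB : ∀ x ∈ Icc a b, DifferentiableAt ℝ B x)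
    (hfB : ∀ x ∈ Icc a b, |deriv f x| ≤ deriv B x) : |f b - f a| ≤ B b - B a := by
  simpa using image_norm_le_of_norm_deriv_right_le_deriv_boundary'
    (f := fun x => f x - f a) (B := fun x => B x - B a)
    (fun x hx => ((hf x hx).continuousAt.sub continuousAt_const).continuousWithinAt)
    (fun x hx => ((hf x (Ico_subset_Icc_self hx)).hasDerivAt.sub_const _).hasDerivWithinAt)
    (by simp)
    (fun x hx => ((hB x hx).continuousAt.sub continuousAt_const).continuousWithinAt)
    (fun x hx => ((hB x (Ico_subset_Icc_self hx)).hasDerivAt.sub_const _).hasDerivWithinAt)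
    (fun x hx => hfB x (Ico_subset_Icc_self hx)) (right_mem_Icc.2 hab)

theorem abs_deriv_phi_le {g : ℝ → ℝ} {x C M : ℝ} (hg : DifferentiableAt ℝ g x)
    (hg' : DifferentiableAt ℝ (deriv g) x) (hg'' : DifferentiableAt ℝ (deriv (deriv g)) x)
    (hgx : 0 < g x) (hg'x : 0 < deriv g x) (hH : |H g x| ≤ M)
    (hH' : |deriv (H g) x| ≤ C * (deriv g x / g x)) :
    |deriv (phi g) x| ≤ (C + M) * (deriv g x / g x ^ 2) := by
  have hHd : DifferentiableAt ℝ (H g) x :=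
    (hg.mul hg'').div (hg'.pow 2) (pow_ne_zero 2 hg'x.ne')
  have heq : phi g =ᶠ[𝓝 x] H g / g := by
    filter_upwards [hg.continuousAt.eventually_ne hgx.ne'] with t ht
    simp only [Pi.div_apply, H, phi]
    field_simp
  rw [heq.deriv_eq, (hHd.hasDerivAt.div hg.hasDerivAt hgx.ne').deriv, abs_div,
    abs_of_pos (by positivity : 0 < g x ^ 2), div_le_iff₀ (by positivity)]
  calc |deriv (H g) x * g x - H g x * deriv g x|
      ≤ |deriv (H g) x| * g x + |H g x| * deriv g x := by
        refine (abs_sub _ _).trans ?_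
        rw [abs_mul, abs_mul, abs_of_pos hgx, abs_of_pos hg'x]
    _ ≤ C * (deriv g x / g x) * g x + M * deriv g x := by gcongr
    _ = (C + M) * (deriv g x / g x ^ 2) * g x ^ 2 := by field_simp

structure IncreasingConvexFrom (g : ℝ → ℝ) (a : ℝ) : Prop where
  differentiableAt : ∀ x, a ≤ x → DifferentiableAt ℝ g x
  differentiableAt_deriv : ∀ x, a ≤ x → DifferentiableAt ℝ (deriv g) x
  deriv_pos : ∀ x, a ≤ x → 0 < deriv g x
  deriv_deriv_nonneg : ∀ x, a ≤ x → 0 ≤ deriv (deriv g) x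

namespace IncreasingConvexFrom

variable {g : ℝ → ℝ} {a s : ℝ}

theorem monotoneOn (h : IncreasingConvexFrom g a) : MonotoneOn g (Ici a) :=
  monotoneOn_Ici_of_deriv_nonneg h.differentiableAt
    fun x hx => (h.deriv_pos x (mem_Ici_of_Ioi hx)).le

theorem monotoneOn_deriv (h : IncreasingConvexFrom g a) : MonotoneOn (deriv g) (Ici a) :=
  monotoneOn_Ici_of_deriv_nonneg h.differentiableAt_deriv
    fun x hx => h.deriv_deriv_nonneg x (mem_Ici_of_Ioi hx)

theorem phi_nonneg (h : IncreasingConvexFrom g a) {x : ℝ} (hx : a ≤ x) : 0 ≤ phi g x :=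
  div_nonneg (h.deriv_deriv_nonneg x hx) (sq_nonneg _)

theorem tendsto_atTop (h : IncreasingConvexFrom g a) : Tendsto g atTop atTop := by
  have hlin : ∀ x ∈ Ici a, g a + deriv g a * (x - a) ≤ g x := by
    intro x hx
    have := (convex_Ici a).mul_sub_le_image_sub_of_le_deriv
      (fun x hx => (h.differentiableAt x hx).continuousAt.continuousWithinAt)
      (by
        rw [interior_Ici]
        exact fun x hx => (h.differentiableAt x (mem_Ici_of_Ioi hx)).differentiableWithinAt)
      (by
        rw [interior_Ici]
        exact fun x hx => h.monotoneOn_deriv self_mem_Ici (mem_Ici_of_Ioi hx) (le_of_lt hx))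
      a self_mem_Ici x hx hx
    linarith
  refine tendsto_atTop_mono' _ (eventually_ge_atTop a |>.mono hlin) ?_
  exact tendsto_atTop_add_const_left _ _
    ((tendsto_id.atTop_add tendsto_const_nhds).const_mul_atTop (h.deriv_pos a le_rfl))

theorem tendsto_exp_neg_div_deriv (h : IncreasingConvexFrom g a) :
    Tendsto (fun t => exp (-g t) / deriv g t) atTop (𝓝 0) := by
  have hδ := h.deriv_pos a le_rfl
  refine squeeze_zero'
    ((eventually_ge_atTop a).mono fun t ht => (div_pos (exp_pos _) (h.deriv_pos t ht)).le)
    ((eventually_ge_atTop a).mono fun t ht => div_le_div_of_nonneg_left (exp_pos _).le hδ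
      (h.monotoneOn_deriv self_mem_Ici ht ht)) ?_
  simpa using (tendsto_exp_neg_atTop_nhds_zero.comp h.tendsto_atTop).div_const (deriv g a)

theorem hasDerivAt_neg_exp_neg_div_deriv (h : IncreasingConvexFrom g a) {x : ℝ}
    (hx : a ≤ x) :
    HasDerivAt (fun t => -(exp (-g t) / deriv g t)) (exp (-g x) * (1 + phi g x)) x :=
  ExpNegTail.hasDerivAt_neg_exp_neg_div_deriv (h.differentiableAt x hx)
    (h.differentiableAt_deriv x hx) (h.deriv_pos x hx).ne'

theorem integrableOn_exp_neg_mul_one_add_phi (h : IncreasingConvexFrom g a) (hs : a ≤ s) :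
    IntegrableOn (fun t => exp (-g t) * (1 + phi g t)) (Ioi s) :=
  integrableOn_Ioi_deriv_of_nonneg
    (h.hasDerivAt_neg_exp_neg_div_deriv hs).continuousAt.continuousWithinAt
    (fun x hx => h.hasDerivAt_neg_exp_neg_div_deriv (hs.trans (le_of_lt hx)))
    (fun x hx => mul_nonneg (exp_pos _).le
      (add_nonneg zero_le_one (h.phi_nonneg (hs.trans (le_of_lt hx)))))
    (by simpa using h.tendsto_exp_neg_div_deriv.neg)

theorem integral_exp_neg_mul_one_add_phi (h : IncreasingConvexFrom g a) (hs : a ≤ s) :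
    ∫ t in Ioi s, exp (-g t) * (1 + phi g t) = exp (-g s) / deriv g s := by
  rw [integral_Ioi_of_hasDerivAt_of_tendsto
    (h.hasDerivAt_neg_exp_neg_div_deriv hs).continuousAt.continuousWithinAt
    (fun x hx => h.hasDerivAt_neg_exp_neg_div_deriv (hs.trans (le_of_lt hx)))
    (h.integrableOn_exp_neg_mul_one_add_phi hs) (by simpa using h.tendsto_exp_neg_div_deriv.neg)]
  ring

theorem integrableOn_exp_neg (h : IncreasingConvexFrom g a) (hs : a ≤ s) :
    IntegrableOn (fun t => exp (-g t)) (Ioi s) :=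
  (h.integrableOn_exp_neg_mul_one_add_phi hs).mono'
    (ContinuousOn.aestronglyMeasurable (fun x hx => (h.differentiableAt x
      (hs.trans (le_of_lt hx))).continuousAt.neg.rexp.continuousWithinAt) measurableSet_Ioi)
    (ae_restrict_of_forall_mem measurableSet_Ioi fun t ht => by
      rw [norm_of_nonneg (exp_pos _).le]
      exact le_mul_of_one_le_right (exp_pos _).le
        (le_add_of_nonneg_right (h.phi_nonneg (hs.trans (le_of_lt ht)))))

theorem integrableOn_exp_neg_mul_phi (h : IncreasingConvexFrom g a) (hs : a ≤ s) :
    IntegrableOn (fun t => exp (-g t) * phi g t) (Ioi s) :=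
  ((h.integrableOn_exp_neg_mul_one_add_phi hs).sub (h.integrableOn_exp_neg hs)).congr_fun
    (fun t _ => by simp only [Pi.sub_apply]; ring) measurableSet_Ioi

theorem integral_Ici_exp_neg (h : IncreasingConvexFrom g a) (hs : a ≤ s) :
    ∫ t in Ici s, exp (-g t) = exp (-g s) / deriv g s - ∫ t in Ioi s, exp (-g t) * phi g t := by
  rw [← h.integral_exp_neg_mul_one_add_phi hs, integral_Ici_eq_integral_Ioi,
    ← integral_sub (h.integrableOn_exp_neg_mul_one_add_phi hs) (h.integrableOn_exp_neg_mul_phi hs)]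
  simp only [mul_add, mul_one, add_sub_cancel_right]

theorem hasDerivAt_neg_sub_add_one_mul_exp_neg (h : IncreasingConvexFrom g a) {x : ℝ}
    (hx : a ≤ x) :
    HasDerivAt (fun t => -((g t - g s + 1) * exp (-g t)))
      (exp (-g x) * (g x - g s) * deriv g x) x :=
  ExpNegTail.hasDerivAt_neg_sub_add_one_mul_exp_neg _ (h.differentiableAt x hx)

theorem exp_neg_mul_sub_mul_deriv_nonneg (h : IncreasingConvexFrom g a) (hs : a ≤ s)
    {t : ℝ} (ht : s ≤ t) : 0 ≤ exp (-g t) * (g t - g s) * deriv g t :=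
  mul_nonneg (mul_nonneg (exp_pos _).le (sub_nonneg.2 (h.monotoneOn hs (hs.trans ht) ht)))
    (h.deriv_pos t (hs.trans ht)).le

theorem integrableOn_exp_neg_mul_sub_mul_deriv (h : IncreasingConvexFrom g a) (hs : a ≤ s) :
    IntegrableOn (fun t => exp (-g t) * (g t - g s) * deriv g t) (Ioi s) :=
  integrableOn_Ioi_deriv_of_nonneg
    (h.hasDerivAt_neg_sub_add_one_mul_exp_neg hs).continuousAt.continuousWithinAt
    (fun x hx => h.hasDerivAt_neg_sub_add_one_mul_exp_neg (hs.trans (le_of_lt hx)))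
    (fun x hx => h.exp_neg_mul_sub_mul_deriv_nonneg hs (le_of_lt hx))
    (by simpa using (tendsto_sub_add_one_mul_exp_neg h.tendsto_atTop (g s)).neg)

theorem integral_exp_neg_mul_sub_mul_deriv (h : IncreasingConvexFrom g a) (hs : a ≤ s) :
    ∫ t in Ioi s, exp (-g t) * (g t - g s) * deriv g t = exp (-g s) := by
  rw [integral_Ioi_of_hasDerivAt_of_tendsto
    (h.hasDerivAt_neg_sub_add_one_mul_exp_neg hs).continuousAt.continuousWithinAt
    (fun x hx => h.hasDerivAt_neg_sub_add_one_mul_exp_neg (hs.trans (le_of_lt hx)))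
    (h.integrableOn_exp_neg_mul_sub_mul_deriv hs)
    (by simpa using (tendsto_sub_add_one_mul_exp_neg h.tendsto_atTop (g s)).neg)]
  ring

theorem abs_phi_sub_le (h : IncreasingConvexFrom g a) {C M : ℝ} (hgpos : ∀ x, a ≤ x → 0 < g x)
    (hd'' : ∀ x, a ≤ x → DifferentiableAt ℝ (deriv (deriv g)) x)
    (hH : ∀ x, a ≤ x → |H g x| ≤ M)
    (hH' : ∀ x, a ≤ x → |deriv (H g) x| ≤ C * (deriv g x / g x))
    (hs : a ≤ s) {t : ℝ} (hst : s ≤ t) :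
    |phi g t - phi g s| ≤ (C + M) * (g t - g s) / g s ^ 2 := by
  have hphi : ∀ x, a ≤ x → DifferentiableAt ℝ (phi g) x := fun x hx =>
    (hd'' x hx).div ((h.differentiableAt_deriv x hx).pow 2) (pow_ne_zero 2 (h.deriv_pos x hx).ne')
  have hK : ∀ x, a ≤ x → |deriv (phi g) x| ≤ (C + M) * (deriv g x / g x ^ 2) := fun x hx =>
    abs_deriv_phi_le (h.differentiableAt x hx) (h.differentiableAt_deriv x hx) (hd'' x hx)
      (hgpos x hx) (h.deriv_pos x hx) (hH x hx) (hH' x hx)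
  have hK0 : 0 ≤ C + M := nonneg_of_mul_nonneg_left ((abs_nonneg _).trans (hK a le_rfl))
    (div_pos (h.deriv_pos a le_rfl) (pow_pos (hgpos a le_rfl) 2))
  have hB : ∀ x, a ≤ x →
      HasDerivAt (fun y => -(C + M) * (g y)⁻¹) ((C + M) * (deriv g x / g x ^ 2)) x :=
    fun x hx => (((h.differentiableAt x hx).hasDerivAt.inv (hgpos x hx).ne').const_mul
      (-(C + M))).congr_deriv (by ring)
  have hgs := hgpos s hs
  have hgt := hgpos t (hs.trans hst)
  have hgst := h.monotoneOn hs (hs.trans hst) hst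
  calc |phi g t - phi g s| ≤ -(C + M) * (g t)⁻¹ - -(C + M) * (g s)⁻¹ :=
        abs_sub_le_sub_of_abs_deriv_le hst (fun x hx => hphi x (hs.trans hx.1))
          (fun x hx => (hB x (hs.trans hx.1)).differentiableAt)
          (fun x hx => (hB x (hs.trans hx.1)).deriv ▸ hK x (hs.trans hx.1))
    _ = (C + M) * (g t - g s) / (g s * g t) := by
        field_simp
        ring
    _ ≤ (C + M) * (g t - g s) / g s ^ 2 := by
        rw [sq]
        gcongr

theorem abs_exp_mul_deriv_mul_integral_sub_le (h : IncreasingConvexFrom g a) (hs : a ≤ s) {K : ℝ}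
    (hlip : ∀ t, s ≤ t → |phi g t - phi g s| ≤ K * (g t - g s) / g s ^ 2) :
    |exp (g s) * deriv g s *
        ((∫ t in Ioi s, exp (-g t) * phi g t) - phi g s * ∫ t in Ici s, exp (-g t))| ≤
      K / g s ^ 2 := by
  have hg's := h.deriv_pos s hs
  have hbound : ∀ t ∈ Ioi s, ‖exp (-g t) * (phi g t - phi g s)‖ ≤
      K / (g s ^ 2 * deriv g s) * (exp (-g t) * (g t - g s) * deriv g t) := by
    intro t ht
    have hlipt := hlip t (le_of_lt ht)
    have hmono : deriv g s ≤ deriv g t :=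
      h.monotoneOn_deriv hs (hs.trans (le_of_lt ht)) (le_of_lt ht)
    have h0 : 0 ≤ K * (g t - g s) / g s ^ 2 := (abs_nonneg _).trans hlipt
    rw [norm_mul, norm_of_nonneg (exp_pos _).le, Real.norm_eq_abs]
    calc exp (-g t) * |phi g t - phi g s| ≤ exp (-g t) * (K * (g t - g s) / g s ^ 2) := by
          gcongr
      _ ≤ exp (-g t) * (K * (g t - g s) / g s ^ 2) * (deriv g t / deriv g s) :=
          le_mul_of_one_le_right (by positivity) ((one_le_div hg's).2 hmono)
      _ = K / (g s ^ 2 * deriv g s) * (exp (-g t) * (g t - g s) * deriv g t) := by ring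
  have hint : |(∫ t in Ioi s, exp (-g t) * phi g t) - phi g s * ∫ t in Ici s, exp (-g t)| ≤
      K * exp (-g s) / (g s ^ 2 * deriv g s) :=
    calc _ = ‖∫ t in Ioi s, exp (-g t) * (phi g t - phi g s)‖ := by
          rw [Real.norm_eq_abs, integral_Ici_eq_integral_Ioi, ← integral_const_mul,
            ← integral_sub (h.integrableOn_exp_neg_mul_phi hs)
              ((h.integrableOn_exp_neg hs).const_mul _)]
          congr 2 with t
          ring
      _ ≤ ∫ t in Ioi s, K / (g s ^ 2 * deriv g s) * (exp (-g t) * (g t - g s) * deriv g t) :=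
          norm_integral_le_of_norm_le ((h.integrableOn_exp_neg_mul_sub_mul_deriv hs).const_mul _)
            (ae_restrict_of_forall_mem measurableSet_Ioi hbound)
      _ = K * exp (-g s) / (g s ^ 2 * deriv g s) := by
          rw [integral_const_mul, h.integral_exp_neg_mul_sub_mul_deriv hs]
          ring
  rw [abs_mul, abs_of_pos (by positivity)]
  calc exp (g s) * deriv g s * |_|
      ≤ exp (g s) * deriv g s * (K * exp (-g s) / (g s ^ 2 * deriv g s)) := by gcongr
    _ = K / g s ^ 2 := by
        rw [exp_neg]
        field_simp

theorem one_sub_exp_mul_deriv_mul_integral_eq (h : IncreasingConvexFrom g a) (hs : a ≤ s)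
    (hgs : g s ≠ 0) :
    1 - exp (g s) * deriv g s * ∫ t in Ici s, exp (-g t) =
      H g s / g s * (exp (g s) * deriv g s * ∫ t in Ici s, exp (-g t)) +
        exp (g s) * deriv g s *
          ((∫ t in Ioi s, exp (-g t) * phi g t) - phi g s * ∫ t in Ici s, exp (-g t)) := by
  have hg's := (h.deriv_pos s hs).ne'
  rw [h.integral_Ici_exp_neg hs, H, phi, exp_neg]
  field_simp
  ring

end IncreasingConvexFrom

theorem differentiableAt_of_contDiffOn_three {g : ℝ → ℝ} {U : Set ℝ} (hU : IsOpen U)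
    (hg : ContDiffOn ℝ 3 g U) {x : ℝ} (hx : x ∈ U) :
    DifferentiableAt ℝ g x ∧ DifferentiableAt ℝ (deriv g) x ∧
      DifferentiableAt ℝ (deriv (deriv g)) x := by
  have hg' : ContDiffOn ℝ 2 (deriv g) U := hg.deriv_of_isOpen hU (by norm_num)
  have hg'' : ContDiffOn ℝ 1 (deriv (deriv g)) U := hg'.deriv_of_isOpen hU (by norm_num)
  exact ⟨(hg.differentiableOn (by norm_num)).differentiableAt (hU.mem_nhds hx),
    (hg'.differentiableOn (by norm_num)).differentiableAt (hU.mem_nhds hx),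
    (hg''.differentiableOn one_ne_zero).differentiableAt (hU.mem_nhds hx)⟩

theorem deriv_deriv_pos_of_H_pos {g : ℝ → ℝ} {x : ℝ} (hgx : 0 < g x) (hg'x : 0 < deriv g x)
    (hH : 0 < H g x) : 0 < deriv (deriv g) x := by
  rw [H, mul_div_assoc] at hH
  exact (div_pos_iff_of_pos_right (pow_pos hg'x 2)).1 (pos_of_mul_pos_right hH hgx.le)

theorem tendsto_and_exists_of_one_sub_eq {P E g H : ℝ → ℝ} {c K : ℝ} (hc : c ≠ 0)
    (hg : Tendsto g atTop atTop) (hH : Tendsto H atTop (𝓝 c))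
    (hrel : ∀ᶠ s in atTop, 1 - P s = H s / g s * P s + E s)
    (hE : ∀ᶠ s in atTop, |E s| ≤ K / g s ^ 2) :
    (∃ e : ℝ → ℝ, Tendsto e atTop (𝓝 0) ∧ ∀ᶠ s in atTop, P s = 1 - (1 + e s) * H s / g s) ∧
      Tendsto P atTop (𝓝 1) := by
  have hgpos := hg.eventually_gt_atTop 0
  have hEg : Tendsto (fun s => E s * g s) atTop (𝓝 0) := by
    refine squeeze_zero_norm' ?_ (hg.const_div_atTop K)
    filter_upwards [hE, hgpos] with s hs hgs
    rw [norm_mul, Real.norm_eq_abs, Real.norm_eq_abs, abs_of_pos hgs]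
    calc |E s| * g s ≤ K / g s ^ 2 * g s := by gcongr
      _ = K / g s := by field_simp
  have hE0 : Tendsto E atTop (𝓝 0) :=
    squeeze_zero_norm' hE (((tendsto_pow_atTop two_ne_zero).comp hg).const_div_atTop K)
  have hphi : Tendsto (fun s => H s / g s) atTop (𝓝 0) := hH.div_atTop hg
  have hP : Tendsto P atTop (𝓝 1) := by
    have hnum : Tendsto (fun s => 1 - E s) atTop (𝓝 1) := by
      simpa using tendsto_const_nhds.sub hE0
    have hden : Tendsto (fun s => 1 + H s / g s) atTop (𝓝 1) := by
      simpa using tendsto_const_nhds.add hphi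
    have hlim := hnum.div hden one_ne_zero
    rw [div_one] at hlim
    refine hlim.congr' ?_
    filter_upwards [hrel, hphi.eventually (lt_mem_nhds (by norm_num : (-1 : ℝ) < 0))]
      with s hs hs'
    rw [Pi.div_apply, div_eq_iff (by linarith)]
    linarith
  refine ⟨⟨fun s => (1 - P s) * g s / H s - 1, ?_, ?_⟩, hP⟩
  · have hlim := (hP.sub_const 1).add (hEg.div hH hc)
    rw [sub_self, zero_div, add_zero] at hlim
    refine hlim.congr' ?_
    filter_upwards [hrel, hgpos, hH.eventually_ne hc] with s hs hgs hHs
    simp only [Pi.div_apply]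
    rw [hs]
    field_simp
    ring
  · filter_upwards [hgpos, hH.eventually_ne hc] with s hgs hHs
    field_simp
    ring

end ExpNegTail

open ExpNegTail

theorem stmt_10_general (g : ℝ → ℝ) (s₀ q C : ℝ) (hq : 1 ≤ q)
    (hC3 : ContDiffOn ℝ 3 g (Ioi s₀))
    (hgpos : ∀ s ∈ Ioi s₀, 0 < g s)
    (hg' : ∀ s ∈ Ioi s₀, 0 < deriv g s)
    (hlim : Tendsto (fun s => g s * deriv (deriv g) s / (deriv g s) ^ 2)
      atTop (nhds (1 / q)))
    (hH' : ∀ s ∈ Ioi s₀,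
      |deriv (fun u => g u * deriv (deriv g) u / (deriv g u) ^ 2) s|
        ≤ C * (deriv g s / g s)) :
    (∃ e : ℝ → ℝ, Tendsto e atTop (nhds 0) ∧
      ∀ᶠ s in atTop,
        (∫ t in Ici s, Real.exp (-(g t))) =
          1 / (Real.exp (g s) * deriv g s) *
            (1 - (1 + e s) *
              (g s * deriv (deriv g) s / (deriv g s) ^ 2) / g s)) ∧
    Tendsto (fun s => Real.exp (g s) * deriv g s * ∫ t in Ici s, Real.exp (-(g t)))
      atTop (nhds 1) := by
  have hq0 : (0 : ℝ) < 1 / q := one_div_pos.2 (by linarith)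
  obtain ⟨a, ha⟩ := eventually_atTop.1 ((eventually_gt_atTop s₀).and
    ((hlim.eventually (lt_mem_nhds hq0)).and (hlim.eventually (gt_mem_nhds (lt_add_one _)))))
  have hs₀ (x : ℝ) (hx : a ≤ x) : x ∈ Ioi s₀ := (ha x hx).1
  have hH (x : ℝ) (hx : a ≤ x) : |H g x| ≤ 1 / q + 1 :=
    (abs_of_pos (ha x hx).2.1).trans_le (ha x hx).2.2.le
  have hreg (x : ℝ) (hx : a ≤ x) := differentiableAt_of_contDiffOn_three isOpen_Ioi hC3 (hs₀ x hx)
  have h : IncreasingConvexFrom g a :=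
    ⟨fun x hx => (hreg x hx).1, fun x hx => (hreg x hx).2.1, fun x hx => hg' x (hs₀ x hx),
      fun x hx => (deriv_deriv_pos_of_H_pos (hgpos x (hs₀ x hx)) (hg' x (hs₀ x hx))
        (ha x hx).2.1).le⟩
  have hlip (s : ℝ) (hs : a ≤ s) (t : ℝ) (hst : s ≤ t) :=
    h.abs_phi_sub_le (fun x hx => hgpos x (hs₀ x hx)) (fun x hx => (hreg x hx).2.2) hH
      (fun x hx => hH' x (hs₀ x hx)) hs hst
  obtain ⟨⟨e, he, heq⟩, hP⟩ := tendsto_and_exists_of_one_sub_eq hq0.ne' h.tendsto_atTop hlim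
    ((eventually_ge_atTop a).mono fun s hs =>
      h.one_sub_exp_mul_deriv_mul_integral_eq hs (hgpos s (hs₀ s hs)).ne')
    ((eventually_ge_atTop a).mono fun s hs =>
      h.abs_exp_mul_deriv_mul_integral_sub_le hs (hlip s hs))
  refine ⟨⟨e, he, ?_⟩, hP⟩
  filter_upwards [heq, eventually_ge_atTop a] with s hs has
  rw [← hs, one_div, inv_mul_cancel_left₀ (mul_pos (exp_pos _) (h.deriv_pos s has)).ne']

/-- Under (G1)-(G2), F(s) := ∫_s^∞ e^{-g(t)} dt satisfies
F(s) = (1/(e^{g(s)} g'(s)))·(1 - (1 + o(1))·H(s)/g(s)) as s → ∞; in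
particular f'(s)F(s) = e^{g(s)} g'(s) F(s) → 1. -/
theorem stmt_10 (g : ℝ → ℝ) (s₀ q C : ℝ) (hq : 1 ≤ q) (hC : 0 < C)
    (hC3 : ContDiffOn ℝ 3 g (Ioi s₀))
    (hgpos : ∀ s ∈ Ioi s₀, 0 < g s)
    (hg' : ∀ s ∈ Ioi s₀, 0 < deriv g s)
    (hintF : ∀ s ∈ Ioi s₀, IntegrableOn (fun t => Real.exp (-(g t))) (Ici s))
    (hlim : Tendsto (fun s => g s * deriv (deriv g) s / (deriv g s) ^ 2)
      atTop (nhds (1 / q)))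
    (hH' : ∀ s ∈ Ioi s₀,
      |deriv (fun u => g u * deriv (deriv g) u / (deriv g u) ^ 2) s|
        ≤ C * (deriv g s / g s)) :
    (∃ e : ℝ → ℝ, Tendsto e atTop (nhds 0) ∧
      ∀ᶠ s in atTop,
        (∫ t in Ici s, Real.exp (-(g t))) =
          1 / (Real.exp (g s) * deriv g s) *
            (1 - (1 + e s) *
              (g s * deriv (deriv g) s / (deriv g s) ^ 2) / g s)) ∧
    Tendsto (fun s => Real.exp (g s) * deriv g s * ∫ t in Ici s, Real.exp (-(g t)))
      atTop (nhds 1) :=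
  stmt_10_general g s₀ q C hq hC3 hgpos hg' hlim hH'
end

section
/- Let U, V be C² positive radial solutions of -Δu = f(u) in an annulus A = B_{r₂} \ B_{r₁} ⊂ ℝ², with f convex and increasing on the relevant range. If U is unstable in A (i.e., there exists φ ∈ C_c^∞(A) with ∫_A f'(U)φ² > ∫_A |∇φ|²), then it is not the case that V > U everywhere in A; i.e., either V < U somewhere in A with an intersection V(r) = U(r) for some r ∈ [r₁,r₂], or V ≤ U somewhere. -/
open Real Filter Set MeasureTheory Metric
open scoped Manifold

/-- The Laplacian of u : ℝ² → ℝ, as the trace of the second derivative. -/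
noncomputable def lap (u : EuclideanSpace ℝ (Fin 2) → ℝ)
    (x : EuclideanSpace ℝ (Fin 2)) : ℝ :=
  ∑ i : Fin 2, iteratedFDeriv ℝ 2 u x
    ![EuclideanSpace.single i (1 : ℝ), EuclideanSpace.single i (1 : ℝ)]

private lemma sum_sq_apply_le_norm_sq (L : EuclideanSpace ℝ (Fin 2) →L[ℝ] ℝ) :
    ∑ i : Fin 2, (L (EuclideanSpace.single i (1 : ℝ))) ^ 2 ≤ ‖L‖ ^ 2 := by
  set a := L (EuclideanSpace.single 0 (1:ℝ)) with ha
  set b := L (EuclideanSpace.single 1 (1:ℝ)) with hb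
  rw [Fin.sum_univ_two]
  set u : EuclideanSpace ℝ (Fin 2) :=
    a • EuclideanSpace.single 0 (1:ℝ) + b • EuclideanSpace.single 1 (1:ℝ) with hu
  have hLu : L u = a ^ 2 + b ^ 2 := by
    simp [hu, map_add, _root_.map_smul, smul_eq_mul, ← ha, ← hb]; ring
  have hnorm : ‖u‖ = Real.sqrt (a ^ 2 + b ^ 2) := by
    rw [EuclideanSpace.norm_eq]
    congr 1
    rw [Fin.sum_univ_two]
    have h0 : u 0 = a := by simp [hu, EuclideanSpace.single_apply]
    have h1 : u 1 = b := by simp [hu, EuclideanSpace.single_apply]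
    rw [h0, h1]; simp [Real.norm_eq_abs, sq_abs]
  have hle : a^2 + b^2 ≤ ‖L‖ * Real.sqrt (a^2+b^2) := by
    calc a^2+b^2 = L u := hLu.symm
    _ ≤ |L u| := le_abs_self _
    _ = ‖L u‖ := (Real.norm_eq_abs _).symm
    _ ≤ ‖L‖ * ‖u‖ := L.le_opNorm u
    _ = ‖L‖ * Real.sqrt (a^2+b^2) := by rw [hnorm]
  have h2 : Real.sqrt (a^2+b^2) ^ 2 = a^2+b^2 := Real.sq_sqrt (by positivity)
  nlinarith [Real.sqrt_nonneg (a^2+b^2), norm_nonneg L, sq_nonneg (Real.sqrt (a^2+b^2) - ‖L‖)]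

private lemma young_ineq (a b p t : ℝ) (ht : 0 < t) :
    (p ^ 2 * (-(t ^ 2)⁻¹ * b) + t⁻¹ * (2 * p * a)) * b ≤ a ^ 2 := by
  have ht2 : (0:ℝ) < t ^ 2 := by positivity
  have hrw : p ^ 2 * (-(t ^ 2)⁻¹ * b) + t⁻¹ * (2 * p * a) =
      (2 * p * a * t - p ^ 2 * b) / t ^ 2 := by
    field_simp
    ring
  rw [hrw, div_mul_eq_mul_div, div_le_iff₀ ht2]
  nlinarith [sq_nonneg (a * t - p * b)]

private lemma lap_eq (u : EuclideanSpace ℝ (Fin 2) → ℝ) (x : EuclideanSpace ℝ (Fin 2)) :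
    lap u x = ∑ i : Fin 2, fderiv ℝ (fderiv ℝ u) x (EuclideanSpace.single i (1 : ℝ))
      (EuclideanSpace.single i (1 : ℝ)) := by
  unfold lap
  refine Finset.sum_congr rfl fun i _ => ?_
  rw [iteratedFDeriv_two_apply]
  simp

set_option maxHeartbeats 1000000

/-- If U, V are C² positive solutions of -Δu = f(u) in an
annulus A ⊂ ℝ², with f convex, increasing and differentiable, and U is
unstable in A, then V > U cannot hold everywhere in A. -/
theorem stmt_16 (f : ℝ → ℝ) (U V : EuclideanSpace ℝ (Fin 2) → ℝ)
    (r₁ r₂ : ℝ) (hr : 0 < r₁) (hr12 : r₁ < r₂)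
    (A : Set (EuclideanSpace ℝ (Fin 2)))
    (hA : A = ball (0 : EuclideanSpace ℝ (Fin 2)) r₂ \
      closedBall (0 : EuclideanSpace ℝ (Fin 2)) r₁)
    (hfconv : ConvexOn ℝ univ f) (hfmono : Monotone f)
    (hfdiff : Differentiable ℝ f)
    (hU : ContDiffOn ℝ 2 U A) (hV : ContDiffOn ℝ 2 V A)
    (hUpos : ∀ x ∈ A, 0 < U x) (hVpos : ∀ x ∈ A, 0 < V x)
    (hUeq : ∀ x ∈ A, -lap U x = f (U x))
    (hVeq : ∀ x ∈ A, -lap V x = f (V x))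
    (hunstable : ∃ φ : EuclideanSpace ℝ (Fin 2) → ℝ,
      ContDiff ℝ (⊤ : ℕ∞) φ ∧ HasCompactSupport φ ∧ tsupport φ ⊆ A ∧
        (∫ x in A, ‖fderiv ℝ φ x‖ ^ 2) < ∫ x in A, deriv f (U x) * (φ x) ^ 2) :
    ¬ (∀ x ∈ A, U x < V x) := by
  intro hlt
  obtain ⟨φ, hφsm, hφcs, hφsupp, hφint⟩ := hunstable
  set e : Fin 2 → EuclideanSpace ℝ (Fin 2) := fun i => EuclideanSpace.single i (1 : ℝ) with he
  have hAopen : IsOpen A := by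
    rw [hA]; exact isOpen_ball.sdiff Metric.isClosed_closedBall
  set K := tsupport φ with hK
  have hKc : IsCompact K := hφcs
  have hKA : K ⊆ A := hφsupp
  -- compact neighborhoods and a smooth cutoff
  obtain ⟨K', hK'c, hKK', hK'A⟩ := exists_compact_between hKc hAopen hKA
  obtain ⟨L2, hL2c, hK'L2, hL2A⟩ := exists_compact_between hK'c hAopen hK'A
  obtain ⟨χ₀, hχ0, hχ1, hχ01⟩ :=
    exists_contMDiffMap_zero_one_of_isClosed (I := 𝓘(ℝ, EuclideanSpace ℝ (Fin 2))) (n := (⊤ : ℕ∞))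
      (isClosed_compl_iff.mpr isOpen_interior) hK'c.isClosed
      (disjoint_left.mpr fun x hx hx' => hx (hK'L2 hx'))
  set χ : EuclideanSpace ℝ (Fin 2) → ℝ := ⇑χ₀ with hχdef
  have hχsm : ContDiff ℝ 2 χ :=
    (contMDiff_iff_contDiff.mp χ₀.contMDiff).of_le (WithTop.coe_le_coe.mpr le_top)
  have hχsupp : tsupport χ ⊆ L2 := by
    refine closure_minimal ?_ hL2c.isClosed
    intro x hx
    by_contra hxL
    exact hx (hχ0 (fun h => hxL (interior_subset h)))
  have hχK' : ∀ x ∈ K', χ x = 1 := fun x hx => hχ1 hx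
  -- the function w
  set w : EuclideanSpace ℝ (Fin 2) → ℝ := fun x => χ x * (V x - U x) with hw
  have hdiffVU : ∀ x ∈ A, ContDiffAt ℝ 2 (fun y => V y - U y) x := fun x hx =>
    (hV.contDiffAt (hAopen.mem_nhds hx)).sub (hU.contDiffAt (hAopen.mem_nhds hx))
  have hwA_eq : ∀ x ∈ interior K', w =ᶠ[nhds x] fun y => V y - U y := by
    intro x hx
    filter_upwards [isOpen_interior.mem_nhds hx] with y hy
    rw [hw]; simp only [hχK' y (interior_subset hy), one_mul]
  have hwpos : ∀ x ∈ K', 0 < w x := by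
    intro x hx
    have h1 := hlt x (hK'A hx)
    rw [hw]; simp only [hχK' x hx, one_mul]; linarith
  have hwC : ContDiff ℝ 2 w := by
    rw [contDiff_iff_contDiffAt]
    intro x
    by_cases hx : x ∈ A
    · exact (hχsm.contDiffAt).mul (hdiffVU x hx)
    · have hev : w =ᶠ[nhds x] fun _ => 0 := by
        have hxL : x ∉ L2 := fun h => hx (hL2A h)
        filter_upwards [hL2c.isClosed.isOpen_compl.mem_nhds hxL] with y hy
        have hy0 : χ y = 0 := image_eq_zero_of_notMem_tsupport (fun h => hy (hχsupp h))
        rw [hw]; simp [hy0]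
      exact (contDiffAt_const (c := 0)).congr_of_eventuallyEq hev
  have hwdiff : Differentiable ℝ w := hwC.differentiable (by norm_num)
  -- the test function ψ
  set ψ : EuclideanSpace ℝ (Fin 2) → ℝ := fun x => φ x ^ 2 * (w x)⁻¹ with hψdef
  have hψK : Function.support ψ ⊆ K := by
    intro x hx
    have : φ x ≠ 0 := by
      intro h0; apply hx; rw [hψdef]; simp [h0]
    exact subset_tsupport φ this
  have hψts : tsupport ψ ⊆ K := closure_minimal hψK (isClosed_tsupport φ)
  have hψcs : HasCompactSupport ψ := IsCompact.of_isClosed_subset hKc (isClosed_closure) hψts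
  have hwx0 : ∀ x ∈ interior K', w x ≠ 0 := fun x hx => (hwpos x (interior_subset hx)).ne'
  have hcover : ∀ x : EuclideanSpace ℝ (Fin 2), x ∈ interior K' ∨ x ∉ K := by
    intro x
    by_cases h : x ∈ interior K'
    · exact Or.inl h
    · exact Or.inr fun hk => h (hKK' hk)
  have hφ2 : ContDiff ℝ 2 φ := hφsm.of_le (WithTop.coe_le_coe.mpr le_top)
  have hψC1 : ContDiff ℝ 1 ψ := by
    rw [contDiff_iff_contDiffAt]
    intro x
    rcases hcover x with hx | hx
    · exact (((hφ2.of_le one_le_two).contDiffAt).pow 2).mul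
        ((hwC.of_le one_le_two).contDiffAt.inv (hwx0 x hx))
    · have hev : ψ =ᶠ[nhds x] fun _ => 0 := by
        filter_upwards [notMem_tsupport_iff_eventuallyEq.mp hx] with y hy
        rw [hψdef]; simp [hy]
      exact (contDiffAt_const (c := 0)).congr_of_eventuallyEq hev
  have hψdiff : Differentiable ℝ ψ := hψC1.differentiable one_ne_zero
  have hψcont : Continuous ψ := hψC1.continuous
  have hψ'cont : Continuous (fderiv ℝ ψ) := hψC1.continuous_fderiv one_ne_zero
  have hψ'0 : ∀ x ∉ K, fderiv ℝ ψ x = 0 := by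
    intro x hx
    have hx' : x ∉ tsupport ψ := fun h => hx (hψts h)
    by_contra h0
    exact hx' (support_fderiv_subset ℝ h0)
  have hφ'0 : ∀ x ∉ K, fderiv ℝ φ x = 0 := by
    intro x hx
    by_contra h0
    exact hx (support_fderiv_subset ℝ h0)
  -- first derivatives of w
  set g : Fin 2 → EuclideanSpace ℝ (Fin 2) → ℝ := fun i x => fderiv ℝ w x (e i) with hg
  have hwC1' : ContDiff ℝ 1 (fderiv ℝ w) := hwC.fderiv_right (by norm_num)
  have hgC : ∀ i, ContDiff ℝ 1 (g i) := fun i => hwC1'.clm_apply contDiff_const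
  have hg'eq : ∀ i x, fderiv ℝ (g i) x (e i) = fderiv ℝ (fderiv ℝ w) x (e i) (e i) := by
    intro i x
    rw [hg]
    rw [fderiv_clm_apply (hwC1'.differentiable one_ne_zero x) (differentiableAt_const _)]
    simp
  -- integrability
  have hInt1 : ∀ i : Fin 2, Integrable (fun x => fderiv ℝ ψ x (e i) * g i x) := by
    intro i
    apply Continuous.integrable_of_hasCompactSupport
    · exact (hψ'cont.clm_apply continuous_const).mul (hgC i).continuous
    · apply HasCompactSupport.mul_right
      exact (hψcs.fderiv ℝ).comp_left (g := fun L : EuclideanSpace ℝ (Fin 2) →L[ℝ] ℝ => L (e i)) rfl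
  have hInt2 : ∀ i : Fin 2, Integrable (fun x => ψ x * fderiv ℝ (g i) x (e i)) := by
    intro i
    apply Continuous.integrable_of_hasCompactSupport
    · exact hψcont.mul (((hgC i).continuous_fderiv one_ne_zero).clm_apply continuous_const)
    · exact hψcs.mul_right
  have hInt3 : ∀ i : Fin 2, Integrable (fun x => ψ x * g i x) := by
    intro i
    apply Continuous.integrable_of_hasCompactSupport
    · exact hψcont.mul (hgC i).continuous
    · exact hψcs.mul_right
  have hInt5 : Integrable (fun x : EuclideanSpace ℝ (Fin 2) => ‖fderiv ℝ φ x‖ ^ 2) := by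
    apply Continuous.integrable_of_hasCompactSupport
    · exact ((hφsm.continuous_fderiv (by simp)).norm.pow 2)
    · exact (hφcs.fderiv ℝ).comp_left (g := fun L : EuclideanSpace ℝ (Fin 2) →L[ℝ] ℝ => ‖L‖ ^ 2) (by simp)
  have hIntlap : Integrable (fun x => ψ x * (-lap w x)) := by
    apply Continuous.integrable_of_hasCompactSupport
    · apply hψcont.mul
      apply Continuous.neg
      have hcont : Continuous fun x => ∑ i : Fin 2,
          fderiv ℝ (fderiv ℝ w) x (e i) (e i) := continuous_finset_sum _ fun i _ =>
        (((hwC1'.continuous_fderiv one_ne_zero).clm_apply continuous_const).clm_apply continuous_const)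
      exact hcont.congr fun x => (lap_eq w x).symm
    · exact hψcs.mul_right
  -- integration by parts
  have hibp : ∀ i : Fin 2, ∫ x, ψ x * fderiv ℝ (g i) x (e i) =
      - ∫ x, fderiv ℝ ψ x (e i) * g i x := fun i =>
    integral_mul_fderiv_eq_neg_fderiv_mul_of_integrable (hInt1 i) (hInt2 i) (hInt3 i)
      (fun x _ => hψdiff x) (fun x _ => (hgC i).differentiable one_ne_zero x)
  have hIBP : ∫ x, ψ x * (-lap w x) = ∫ x, ∑ i : Fin 2, fderiv ℝ ψ x (e i) * g i x := by
    have hpt : ∀ x, ψ x * (-lap w x) =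
        ∑ i : Fin 2, -(ψ x * fderiv ℝ (g i) x (e i)) := by
      intro x
      simp only [lap_eq, hg'eq, mul_neg, Finset.mul_sum, Finset.sum_neg_distrib]
      rfl
    calc ∫ x, ψ x * (-lap w x)
        = ∫ x, ∑ i : Fin 2, -(ψ x * fderiv ℝ (g i) x (e i)) := by
          refine integral_congr_ae (Eventually.of_forall hpt)
      _ = ∑ i : Fin 2, ∫ x, -(ψ x * fderiv ℝ (g i) x (e i)) :=
          integral_finset_sum _ fun i _ => (hInt2 i).neg
      _ = ∑ i : Fin 2, ∫ x, fderiv ℝ ψ x (e i) * g i x := by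
          refine Finset.sum_congr rfl fun i _ => ?_
          rw [integral_neg, hibp i, neg_neg]
      _ = ∫ x, ∑ i : Fin 2, fderiv ℝ ψ x (e i) * g i x :=
          (integral_finset_sum _ fun i _ => hInt1 i).symm
  -- nonnegativity of deriv f
  have hf'nonneg : ∀ t : ℝ, 0 ≤ deriv f t := by
    intro t
    have h := hfconv.slope_le_deriv (mem_univ (t - 1)) (mem_univ t) (by linarith) (hfdiff t)
    have hs : slope f (t - 1) t = f t - f (t - 1) := by
      rw [slope_def_field]; norm_num
    have h0 : 0 ≤ f t - f (t - 1) := sub_nonneg.mpr (hfmono (by linarith))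
    linarith [hs ▸ h]
  -- step 1 : set integral to full integral
  have hC1 : (∫ x in A, deriv f (U x) * φ x ^ 2) = ∫ x, deriv f (U x) * φ x ^ 2 := by
    apply setIntegral_eq_integral_of_forall_compl_eq_zero
    intro x hx
    have hφ0 : φ x = 0 := image_eq_zero_of_notMem_tsupport fun h => hx (hKA h)
    simp [hφ0]
  have hC5 : (∫ x in A, ‖fderiv ℝ φ x‖ ^ 2) = ∫ x, ‖fderiv ℝ φ x‖ ^ 2 := by
    apply setIntegral_eq_integral_of_forall_compl_eq_zero
    intro x hx
    rw [hφ'0 x fun h => hx (hKA h)]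
    simp
  -- step 2 : pointwise comparison with ψ (-Δw)
  have hC2 : (∫ x, deriv f (U x) * φ x ^ 2) ≤ ∫ x, ψ x * (-lap w x) := by
    apply integral_mono_of_nonneg
    · exact Eventually.of_forall fun x => mul_nonneg (hf'nonneg _) (sq_nonneg _)
    · exact hIntlap
    · apply Eventually.of_forall
      intro x
      by_cases hxK : x ∈ K
      · have hxA : x ∈ A := hKA hxK
        have hxint : x ∈ interior K' := hKK' hxK
        have hwx : w x = V x - U x := (hwA_eq x hxint).eq_of_nhds
        have hwxpos : 0 < w x := hwpos x (interior_subset hxint)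
        -- Laplacian identity
        have e1 : fderiv ℝ (fderiv ℝ w) x =
            fderiv ℝ (fderiv ℝ (fun y => V y - U y)) x :=
          ((hwA_eq x hxint).fderiv).fderiv_eq
        have e2 : fderiv ℝ (fderiv ℝ (fun y => V y - U y)) x =
            fderiv ℝ (fun y => fderiv ℝ V y - fderiv ℝ U y) x := by
          apply Filter.EventuallyEq.fderiv_eq
          filter_upwards [hAopen.mem_nhds hxA] with y hy
          exact fderiv_sub
            ((hV.contDiffAt (hAopen.mem_nhds hy)).differentiableAt two_ne_zero)
            ((hU.contDiffAt (hAopen.mem_nhds hy)).differentiableAt two_ne_zero)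
        have hdV : DifferentiableAt ℝ (fderiv ℝ V) x :=
          (((hV.contDiffAt (hAopen.mem_nhds hxA)).fderiv_right
            (m := 1) (by norm_num)).differentiableAt one_ne_zero)
        have hdU : DifferentiableAt ℝ (fderiv ℝ U) x :=
          (((hU.contDiffAt (hAopen.mem_nhds hxA)).fderiv_right
            (m := 1) (by norm_num)).differentiableAt one_ne_zero)
        have e3 : fderiv ℝ (fun y => fderiv ℝ V y - fderiv ℝ U y) x =
            fderiv ℝ (fderiv ℝ V) x - fderiv ℝ (fderiv ℝ U) x := fderiv_sub hdV hdU
        have hlapw : lap w x = lap V x - lap U x := by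
          rw [lap_eq, lap_eq, lap_eq, e1, e2, e3, ← Finset.sum_sub_distrib]
          refine Finset.sum_congr rfl fun i _ => ?_
          simp
        have hlapf : -lap w x = f (V x) - f (U x) := by
          have h1 := hUeq x hxA
          have h2 := hVeq x hxA
          rw [hlapw]; linarith
        -- convexity
        have hconv : deriv f (U x) * (V x - U x) ≤ f (V x) - f (U x) := by
          have h := hfconv.deriv_le_slope (mem_univ (U x)) (mem_univ (V x))
            (hlt x hxA) (hfdiff (U x))
          rw [slope_def_field] at h
          have hVU : 0 < V x - U x := by linarith [hlt x hxA]
          calc deriv f (U x) * (V x - U x)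
              ≤ (f (V x) - f (U x)) / (V x - U x) * (V x - U x) := by
                apply mul_le_mul_of_nonneg_right h (le_of_lt hVU)
            _ = f (V x) - f (U x) := by field_simp
        have hne : V x - U x ≠ 0 := by rw [← hwx]; exact hwxpos.ne'
        have hψx : ψ x * (V x - U x) = φ x ^ 2 := by
          simp only [hψdef, hwx]
          field_simp
        have hψnn : 0 ≤ ψ x := by
          rw [hψdef]
          have : 0 ≤ (w x)⁻¹ := inv_nonneg.mpr (le_of_lt hwxpos)
          positivity
        calc deriv f (U x) * φ x ^ 2 = ψ x * (deriv f (U x) * (V x - U x)) := by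
              rw [← hψx]; ring
          _ ≤ ψ x * (f (V x) - f (U x)) := mul_le_mul_of_nonneg_left hconv hψnn
          _ = ψ x * (-lap w x) := by rw [hlapf]
      · have hφ0 : φ x = 0 := image_eq_zero_of_notMem_tsupport hxK
        have hψ0 : ψ x = 0 := by rw [hψdef]; simp [hφ0]
        simp [hφ0, hψ0]
  -- step 3 : quadratic form comparison
  have hC4 : (∫ x, ∑ i : Fin 2, fderiv ℝ ψ x (e i) * g i x) ≤
      ∫ x, ‖fderiv ℝ φ x‖ ^ 2 := by
    apply integral_mono (integrable_finset_sum _ fun i _ => hInt1 i) hInt5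
    intro x
    show ∑ i : Fin 2, fderiv ℝ ψ x (e i) * g i x ≤ ‖fderiv ℝ φ x‖ ^ 2
    rcases hcover x with hx | hx
    · -- compute fderiv ψ
      have hwxpos : 0 < w x := hwpos x (interior_subset hx)
      have hφx : HasFDerivAt φ (fderiv ℝ φ x) x :=
        (hφsm.differentiable (by simp) x).hasFDerivAt
      have hwx : HasFDerivAt w (fderiv ℝ w x) x := (hwdiff x).hasFDerivAt
      have hpow : HasFDerivAt (fun y => φ y ^ 2)
          (((2 : ℕ) * φ x ^ 1) • fderiv ℝ φ x) x :=
        HasDerivAt.comp_hasFDerivAt x (hasDerivAt_pow 2 (φ x)) hφx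
      have hinv : HasFDerivAt (fun y => (w y)⁻¹)
          ((-(w x ^ 2)⁻¹) • fderiv ℝ w x) x :=
        HasDerivAt.comp_hasFDerivAt x (hasDerivAt_inv hwxpos.ne') hwx
      have hψx : HasFDerivAt ψ (φ x ^ 2 • ((-(w x ^ 2)⁻¹) • fderiv ℝ w x) +
          (w x)⁻¹ • (((2 : ℕ) * φ x ^ 1) • fderiv ℝ φ x)) x := hpow.mul hinv
      have hfd := hψx.fderiv
      have hterm : ∀ i : Fin 2, fderiv ℝ ψ x (e i) * g i x ≤ (fderiv ℝ φ x (e i)) ^ 2 := by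
        intro i
        have happ : fderiv ℝ ψ x (e i) =
            φ x ^ 2 * (-(w x ^ 2)⁻¹ * fderiv ℝ w x (e i)) +
              (w x)⁻¹ * (2 * φ x * fderiv ℝ φ x (e i)) := by
          rw [hfd]
          simp only [ContinuousLinearMap.add_apply, ContinuousLinearMap.smul_apply,
            smul_eq_mul, pow_one, Nat.cast_ofNat]
          try ring
        simp only [hg]
        rw [happ]
        exact young_ineq _ _ _ _ hwxpos
      calc ∑ i : Fin 2, fderiv ℝ ψ x (e i) * g i x
          ≤ ∑ i : Fin 2, (fderiv ℝ φ x (e i)) ^ 2 :=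
            Finset.sum_le_sum fun i _ => hterm i
        _ ≤ ‖fderiv ℝ φ x‖ ^ 2 := sum_sq_apply_le_norm_sq _
    · rw [hψ'0 x hx]
      simp only [ContinuousLinearMap.zero_apply, zero_mul, Finset.sum_const_zero]
      positivity
  linarith [hφint, hC1, hC5, hC2, hIBP, hC4]
end

section
/- Let ℱ(s) := g(s) + 2 log g(s) - log(g(s)/g'(s)) - log(4H(s)) - C/g(s)^{1-ε}, where g satisfies (G1) and (G2), 0 < ε < 1, and C > 0 is sufficiently large. Then ℱ is non-decreasing and convex for all sufficiently large s, and ℱ'(s)/g'(s) → 1 and ℱ''(s)/g''(s) → 1 as s → ∞. -/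
/-!
With the identity `g'' = H g'² / g` one computes `ℱ' = g' (1 + err₁)` and
`ℱ'' = g'' (1 + err₂)`, where each error term is a combination of `H`, `1 / H`,
`A = H' g / g'` and `B = H'' (g / g')²`, divided by `g` or multiplied by `g ^ (ε - 2)`.
Since `H → 1 / q ≠ 0` and (G2) bounds `A` and `B`, these combinations stay bounded while
`1 / g` and `g ^ (ε - 2)` tend to `0`. Hence both error terms vanish at infinity: this gives
the two limits, and eventually `ℱ' > 0` and `ℱ'' > 0`.
-/

open Real Filter Set Topology Asymptotics

namespace RegularGrowth

section Asymptotics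

variable {α : Type*} {l : Filter α}

lemma boundedAtFilter_mul_inv_pow {f u : α → ℝ} {c : ℝ} (k : ℕ)
    (hu : ∀ᶠ x in l, 0 < u x) (hf : ∀ᶠ x in l, |f x| ≤ c * u x ^ k) :
    BoundedAtFilter l (fun x => f x * (u x)⁻¹ ^ k) := by
  refine IsBigO.of_bound c ?_
  filter_upwards [hu, hf] with x hux hfx
  rw [Pi.one_apply, norm_one, mul_one, norm_mul, norm_pow, norm_inv,
    Real.norm_of_nonneg hux.le, Real.norm_eq_abs, inv_pow, ← div_eq_mul_inv,
    div_le_iff₀ (pow_pos hux k)]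
  exact hfx

lemma boundedAtFilter_inv_of_tendsto {K : α → ℝ} {k : ℝ} (hK : Tendsto K l (𝓝 k))
    (hk : k ≠ 0) : BoundedAtFilter l (fun x => (K x)⁻¹) :=
  (hK.inv₀ hk).isBigO_one ℝ

lemma tendsto_div_add_mul_rpow_zero {G P Q : α → ℝ} {r : ℝ} (hG : Tendsto G l atTop)
    (hP : BoundedAtFilter l P) (hQ : BoundedAtFilter l Q) (hr : r < 0) :
    Tendsto (fun x => P x / G x + Q x * G x ^ r) l (𝓝 0) := by
  have hinv : Tendsto (fun x => (G x)⁻¹) l (𝓝 0) := tendsto_inv_atTop_zero.comp hG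
  have hpow : Tendsto (fun x => G x ^ r) l (𝓝 0) := by
    simpa [Function.comp_def] using (tendsto_rpow_neg_atTop (neg_pos.2 hr)).comp hG
  exact Tendsto.congr (fun x => by simp [div_eq_mul_inv])
    ((hP.mul_zeroAtFilter hinv).add (hQ.mul_zeroAtFilter hpow))

lemma tendsto_div_of_eq_mul_one_add {f u X : α → ℝ} (hX : Tendsto X l (𝓝 0))
    (h : ∀ᶠ x in l, u x ≠ 0 ∧ f x = u x * (1 + X x)) :
    Tendsto (fun x => f x / u x) l (𝓝 1) := by
  refine (by simpa using hX.const_add 1 : Tendsto (fun x => 1 + X x) l (𝓝 1)).congr' ?_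
  filter_upwards [h] with x ⟨hu, hf⟩
  rw [hf, mul_div_cancel_left₀ _ hu]

end Asymptotics

section Calculus

variable {D : Set ℝ} {f f' f'' : ℝ → ℝ}

lemma monotoneOn_of_forall_hasDerivAt_nonneg (hD : Convex ℝ D)
    (hf : ∀ x ∈ D, HasDerivAt f (f' x) x) (hf' : ∀ x ∈ D, 0 ≤ f' x) : MonotoneOn f D :=
  monotoneOn_of_hasDerivWithinAt_nonneg hD
    (fun x hx => (hf x hx).continuousAt.continuousWithinAt)
    (fun x hx => (hf x (interior_subset hx)).hasDerivWithinAt)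
    (fun x hx => hf' x (interior_subset hx))

lemma convexOn_of_forall_hasDerivAt2_nonneg (hD : Convex ℝ D)
    (hf : ∀ x ∈ D, HasDerivAt f (f' x) x) (hf' : ∀ x ∈ D, HasDerivAt f' (f'' x) x)
    (hf'' : ∀ x ∈ D, 0 ≤ f'' x) : ConvexOn ℝ D f :=
  convexOn_of_hasDerivWithinAt2_nonneg hD
    (fun x hx => (hf x hx).continuousAt.continuousWithinAt)
    (fun x hx => (hf x (interior_subset hx)).hasDerivWithinAt)
    (fun x hx => (hf' x (interior_subset hx)).hasDerivWithinAt)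
    (fun x hx => hf'' x (interior_subset hx))

end Calculus

noncomputable def H (g : ℝ → ℝ) (s : ℝ) : ℝ := g s * deriv (deriv g) s / deriv g s ^ 2

noncomputable def ℱ (g : ℝ → ℝ) (C ε : ℝ) (s : ℝ) : ℝ :=
  g s + 2 * log (g s) - log (g s / deriv g s) - log (4 * H g s) - C / g s ^ (1 - ε)

noncomputable def A (g : ℝ → ℝ) (s : ℝ) : ℝ := deriv (H g) s * (g s / deriv g s)

noncomputable def B (g : ℝ → ℝ) (s : ℝ) : ℝ := deriv (deriv (H g)) s * (g s / deriv g s) ^ 2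

/-- `ℱ' / g' - 1` in terms of `G = g`, `H` and `A`. -/
noncomputable def err₁ (C ε G H A : ℝ) : ℝ := (H + 1 - A / H) / G + C * (1 - ε) * G ^ (ε - 2)

/-- `ℱ'' / g'' - 1` in terms of `G = g`, `H`, `A` and `B`. -/
noncomputable def err₂ (C ε G H A B : ℝ) : ℝ :=
  (A / H + (H ^ 2 - 1) / H - (B * H - A ^ 2) / H ^ 3) / G
    + C * (1 - ε) * (1 + (ε - 2) / H) * G ^ (ε - 2)

section ErrorTerms

variable {α : Type*} {l : Filter α} {G K a b : α → ℝ} {k : ℝ}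

lemma tendsto_err₁ (C : ℝ) {ε : ℝ} (hε : ε < 2) (hG : Tendsto G l atTop)
    (hK : Tendsto K l (𝓝 k)) (hk : k ≠ 0) (ha : BoundedAtFilter l a) :
    Tendsto (fun x => err₁ C ε (G x) (K x) (a x)) l (𝓝 0) := by
  have hP : BoundedAtFilter l (fun x => K x + 1 - a x / K x) :=
    (((hK.isBigO_one ℝ).add (const_boundedAtFilter l 1)).sub
      (ha.mul (boundedAtFilter_inv_of_tendsto hK hk))).congr_left fun x => by
        simp [div_eq_mul_inv]
  exact tendsto_div_add_mul_rpow_zero hG hP (const_boundedAtFilter l _) (by linarith)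

lemma tendsto_err₂ (C : ℝ) {ε : ℝ} (hε : ε < 2) (hG : Tendsto G l atTop)
    (hK : Tendsto K l (𝓝 k)) (hk : k ≠ 0) (ha : BoundedAtFilter l a)
    (hb : BoundedAtFilter l b) :
    Tendsto (fun x => err₂ C ε (G x) (K x) (a x) (b x)) l (𝓝 0) := by
  have hKb : BoundedAtFilter l K := hK.isBigO_one ℝ
  have hInv := boundedAtFilter_inv_of_tendsto hK hk
  have hP : BoundedAtFilter l
      (fun x => a x / K x + (K x ^ 2 - 1) / K x - (b x * K x - a x ^ 2) / K x ^ 3) :=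
    (((ha.mul hInv).add
      (BoundedAtFilter.mul ((hKb.mul hKb).sub (const_boundedAtFilter l 1)) hInv)).sub
      (BoundedAtFilter.mul ((hb.mul hKb).sub (ha.mul ha)) ((hInv.mul hInv).mul hInv))).congr_left
        fun x => by simp only [Pi.add_apply, Pi.mul_apply, Function.const_apply]; ring
  have hQ : BoundedAtFilter l (fun x => C * (1 - ε) * (1 + (ε - 2) / K x)) :=
    (((hK.inv₀ hk).const_mul (ε - 2)).const_add 1 |>.const_mul (C * (1 - ε))).isBigO_one ℝ
      |>.congr_left fun x => by simp [div_eq_mul_inv]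
  exact tendsto_div_add_mul_rpow_zero hG hP hQ (by linarith)

end ErrorTerms

lemma contDiffOn_H {g : ℝ → ℝ} {U : Set ℝ} {n : ℕ} (hg : ContDiffOn ℝ (n + 2) g U)
    (hU : IsOpen U) (hg₁ : ∀ s ∈ U, deriv g s ≠ 0) : ContDiffOn ℝ n (H g) U := by
  have hd : ContDiffOn ℝ (n + 1) (deriv g) U := hg.deriv_of_isOpen hU (by norm_cast)
  have hdd : ContDiffOn ℝ n (deriv (deriv g)) U := hd.deriv_of_isOpen hU le_rfl
  exact ((hg.of_le (by norm_cast; omega)).mul hdd).div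
    ((hd.of_le (by norm_cast; omega)).pow 2) fun s hs => pow_ne_zero 2 (hg₁ s hs)

section Derivatives

variable {g : ℝ → ℝ} {s : ℝ}

lemma deriv_deriv_eq_H_mul (g_ne : g s ≠ 0) (g₁_ne : deriv g s ≠ 0) :
    deriv (deriv g) s = H g s * deriv g s ^ 2 / g s := by
  unfold H; field_simp

lemma hasDerivAt_ℱ (C ε : ℝ) (hg : DifferentiableAt ℝ g s)
    (hg₁ : DifferentiableAt ℝ (deriv g) s) (hH : DifferentiableAt ℝ (H g) s)
    (g_pos : 0 < g s) (g₁_pos : 0 < deriv g s) (g₂_pos : 0 < deriv (deriv g) s) :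
    HasDerivAt (ℱ g C ε)
      (deriv g s * (1 + err₁ C ε (g s) (H g s) (A g s))) s := by
  have H_pos : 0 < H g s := by unfold H; positivity
  have hpow := hg.hasDerivAt.rpow_const (p := 1 - ε) (Or.inl g_pos.ne')
  refine ((((hg.hasDerivAt.add ((hg.hasDerivAt.log g_pos.ne').const_mul 2)).sub
    ((hg.hasDerivAt.div hg₁.hasDerivAt g₁_pos.ne').log (div_pos g_pos g₁_pos).ne')).sub
    ((hH.hasDerivAt.const_mul 4).log (by positivity))).sub
    ((hasDerivAt_const s C).div hpow (by positivity))).congr_deriv ?_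
  have e₁ : g s ^ (1 - ε - 1) = g s ^ (1 - ε) / g s := rpow_sub_one g_pos.ne' _
  have e₂ : g s ^ (ε - 2) = 1 / (g s ^ (1 - ε) * g s) := by
    rw [eq_div_iff (by positivity), ← rpow_add_one g_pos.ne', ← rpow_add g_pos,
      show ε - 2 + (1 - ε + 1) = 0 by ring, rpow_zero]
  have : 0 < g s ^ (1 - ε) := by positivity
  rw [Pi.div_apply, e₁, err₁, A, e₂, deriv_deriv_eq_H_mul g_pos.ne' g₁_pos.ne']
  field_simp
  ring

lemma hasDerivAt_deriv_ℱ (C ε : ℝ) (hg : DifferentiableAt ℝ g s)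
    (hg₁ : DifferentiableAt ℝ (deriv g) s) (hH : DifferentiableAt ℝ (H g) s)
    (hH₁ : DifferentiableAt ℝ (deriv (H g)) s)
    (g_pos : 0 < g s) (g₁_pos : 0 < deriv g s) (g₂_pos : 0 < deriv (deriv g) s) :
    HasDerivAt
      (fun t => deriv g t * (1 + err₁ C ε (g t) (H g t) (A g t)))
      (deriv (deriv g) s * (1 + err₂ C ε (g s) (H g s) (A g s) (B g s))) s := by
  have H_pos : 0 < H g s := by unfold H; positivity
  have hA := hH₁.hasDerivAt.mul (hg.hasDerivAt.div hg₁.hasDerivAt g₁_pos.ne')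
  have hpow := hg.hasDerivAt.rpow_const (p := ε - 2) (Or.inl g_pos.ne')
  refine (hg₁.hasDerivAt.mul (((((hH.hasDerivAt.add_const 1).sub
    (hA.div hH.hasDerivAt H_pos.ne')).div hg.hasDerivAt g_pos.ne').add
    (hpow.const_mul (C * (1 - ε)))).const_add 1)).congr_deriv ?_
  have e : g s ^ (ε - 2 - 1) = g s ^ (ε - 2) / g s := rpow_sub_one g_pos.ne' _
  simp only [Pi.add_apply, Pi.sub_apply, Pi.mul_apply, Pi.div_apply]
  rw [e, err₂, A, B, deriv_deriv_eq_H_mul g_pos.ne' g₁_pos.ne']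
  field_simp
  ring

end Derivatives

lemma hasDerivAt_ℱ_and_deriv_ℱ {g : ℝ → ℝ} {s₀ s : ℝ} (C ε : ℝ)
    (hg : ContDiffOn ℝ 4 g (Ioi s₀)) (g_pos : ∀ t ∈ Ioi s₀, 0 < g t)
    (g₁_pos : ∀ t ∈ Ioi s₀, 0 < deriv g t) (g₂_pos : ∀ t ∈ Ioi s₀, 0 < deriv (deriv g) t)
    (hs : s ∈ Ioi s₀) :
    HasDerivAt (ℱ g C ε)
        (deriv g s * (1 + err₁ C ε (g s) (H g s) (A g s))) s ∧
      HasDerivAt (deriv (ℱ g C ε))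
        (deriv (deriv g) s * (1 + err₂ C ε (g s) (H g s) (A g s) (B g s))) s := by
  have diff {f : ℝ → ℝ} {n : ℕ} (hf : ContDiffOn ℝ (n + 1) f (Ioi s₀)) {t : ℝ}
      (ht : t ∈ Ioi s₀) : DifferentiableAt ℝ f t :=
    (hf.contDiffAt (isOpen_Ioi.mem_nhds ht)).differentiableAt (by norm_cast)
  have hg₁ : ContDiffOn ℝ 3 (deriv g) (Ioi s₀) := hg.deriv_of_isOpen isOpen_Ioi (by norm_num)
  have hH : ContDiffOn ℝ 2 (H g) (Ioi s₀) :=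
    contDiffOn_H hg isOpen_Ioi fun t ht => (g₁_pos t ht).ne'
  have hH₁ : ContDiffOn ℝ 1 (deriv (H g)) (Ioi s₀) := hH.deriv_of_isOpen isOpen_Ioi le_rfl
  have first {t : ℝ} (ht : t ∈ Ioi s₀) := hasDerivAt_ℱ C ε (diff hg ht) (diff hg₁ ht)
    (diff hH ht) (g_pos t ht) (g₁_pos t ht) (g₂_pos t ht)
  refine ⟨first hs, (hasDerivAt_deriv_ℱ C ε (diff hg hs) (diff hg₁ hs) (diff hH hs)
    (diff hH₁ hs) (g_pos s hs) (g₁_pos s hs) (g₂_pos s hs)).congr_of_eventuallyEq ?_⟩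
  filter_upwards [isOpen_Ioi.mem_nhds hs] with t ht using (first ht).deriv

lemma tendsto_err₁_and_err₂ {g : ℝ → ℝ} {s₀ h ε C₀ : ℝ} (C : ℝ) (hε : ε < 2) (hh : h ≠ 0)
    (g_pos : ∀ s ∈ Ioi s₀, 0 < g s) (g₁_pos : ∀ s ∈ Ioi s₀, 0 < deriv g s)
    (hg : Tendsto g atTop atTop) (hH : Tendsto (H g) atTop (𝓝 h))
    (hHk : ∀ k ∈ ({1, 2} : Finset ℕ), ∀ s ∈ Ioi s₀,
      |iteratedDeriv k (H g) s| ≤ C₀ * (deriv g s / g s) ^ k) :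
    Tendsto (fun s => err₁ C ε (g s) (H g s) (A g s)) atTop (𝓝 0) ∧
      Tendsto (fun s => err₂ C ε (g s) (H g s) (A g s) (B g s)) atTop (𝓝 0) := by
  have hratio : ∀ᶠ s in atTop, 0 < deriv g s / g s :=
    eventually_gt_atTop s₀ |>.mono fun s hs => div_pos (g₁_pos s hs) (g_pos s hs)
  have hA := boundedAtFilter_mul_inv_pow 1 hratio
    (eventually_gt_atTop s₀ |>.mono (hHk 1 (by simp)))
  have hB := boundedAtFilter_mul_inv_pow 2 hratio
    (eventually_gt_atTop s₀ |>.mono (hHk 2 (by simp)))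
  simp only [iteratedDeriv_succ, iteratedDeriv_zero, pow_one, inv_div] at hA hB
  exact ⟨tendsto_err₁ C hε hg hH hh hA, tendsto_err₂ C hε hg hH hh hA hB⟩

end RegularGrowth

open RegularGrowth

theorem stmt_18_general (g : ℝ → ℝ) (s₀ q ε C₀ : ℝ) (hq : 1 ≤ q)
    (hε1 : ε < 1)
    (hC5 : ContDiffOn ℝ 5 g (Ioi s₀))
    (hgpos : ∀ s ∈ Ioi s₀, 0 < g s)
    (hg' : ∀ s ∈ Ioi s₀, 0 < deriv g s)
    (hg'' : ∀ s ∈ Ioi s₀, 0 < deriv (deriv g) s)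
    (hginf : Tendsto g atTop atTop)
    (hlim : Tendsto (fun s => g s * deriv (deriv g) s / (deriv g s) ^ 2)
      atTop (nhds (1 / q)))
    (hG2 : ∀ k ∈ ({1, 2} : Finset ℕ), ∀ s ∈ Ioi s₀,
      |iteratedDeriv k (fun u => g u * deriv (deriv g) u / (deriv g u) ^ 2) s|
        ≤ C₀ * (deriv g s / g s) ^ k) :
    ∃ C₁ > (0 : ℝ), ∀ C ≥ C₁,
      ∃ s₁ : ℝ,
        MonotoneOn (fun s => g s + 2 * Real.log (g s)
            - Real.log (g s / deriv g s)
            - Real.log (4 * (g s * deriv (deriv g) s / (deriv g s) ^ 2))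
            - C / g s ^ (1 - ε)) (Ici s₁) ∧
        ConvexOn ℝ (Ici s₁) (fun s => g s + 2 * Real.log (g s)
            - Real.log (g s / deriv g s)
            - Real.log (4 * (g s * deriv (deriv g) s / (deriv g s) ^ 2))
            - C / g s ^ (1 - ε)) ∧
        Tendsto (fun s =>
            deriv (fun u => g u + 2 * Real.log (g u)
              - Real.log (g u / deriv g u)
              - Real.log (4 * (g u * deriv (deriv g) u / (deriv g u) ^ 2))
              - C / g u ^ (1 - ε)) s / deriv g s) atTop (nhds 1) ∧
        Tendsto (fun s =>
            deriv (deriv (fun u => g u + 2 * Real.log (g u)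
              - Real.log (g u / deriv g u)
              - Real.log (4 * (g u * deriv (deriv g) u / (deriv g u) ^ 2))
              - C / g u ^ (1 - ε))) s / deriv (deriv g) s) atTop (nhds 1) := by
  refine ⟨1, one_pos, fun C _ => ?_⟩
  change ∃ s₁, MonotoneOn (ℱ g C ε) (Ici s₁) ∧ ConvexOn ℝ (Ici s₁) (ℱ g C ε) ∧
    Tendsto (fun s => deriv (ℱ g C ε) s / deriv g s) atTop (𝓝 1) ∧
    Tendsto (fun s => deriv (deriv (ℱ g C ε)) s / deriv (deriv g) s) atTop (𝓝 1)
  have hderiv {s : ℝ} (hs : s ∈ Ioi s₀) := hasDerivAt_ℱ_and_deriv_ℱ C ε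
    (hC5.of_le (by norm_num)) hgpos hg' hg'' hs
  obtain ⟨hX₁, hX₂⟩ := tendsto_err₁_and_err₂ C (ε := ε) (by linarith)
    (one_div_ne_zero (by linarith)) hgpos hg' hginf hlim hG2
  obtain ⟨s₁, hs₁⟩ := eventually_atTop.1 <| (eventually_gt_atTop s₀).and <|
    (hX₁.eventually (lt_mem_nhds neg_one_lt_zero)).and
      (hX₂.eventually (lt_mem_nhds neg_one_lt_zero))
  refine ⟨s₁, ?_, ?_, ?_, ?_⟩
  · exact monotoneOn_of_forall_hasDerivAt_nonneg (convex_Ici s₁)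
      (fun x hx => (hderiv (hs₁ x hx).1).1) fun x hx =>
        (mul_pos (hg' x (hs₁ x hx).1) (by linarith [(hs₁ x hx).2.1])).le
  · exact convexOn_of_forall_hasDerivAt2_nonneg (convex_Ici s₁)
      (fun x hx => (hderiv (hs₁ x hx).1).1.differentiableAt.hasDerivAt)
      (fun x hx => (hderiv (hs₁ x hx).1).2) fun x hx =>
        (mul_pos (hg'' x (hs₁ x hx).1) (by linarith [(hs₁ x hx).2.2])).le
  · exact tendsto_div_of_eq_mul_one_add hX₁ <| eventually_gt_atTop s₀ |>.mono fun s hs =>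
      ⟨(hg' s hs).ne', (hderiv hs).1.deriv⟩
  · exact tendsto_div_of_eq_mul_one_add hX₂ <| eventually_gt_atTop s₀ |>.mono fun s hs =>
      ⟨(hg'' s hs).ne', (hderiv hs).2.deriv⟩

/-- For g satisfying (G1)-(G2), 0 < ε < 1 and C sufficiently
large, the function ℱ(s) = g + 2 log g - log(g/g') - log(4H) - C/g^{1-ε}
is non-decreasing and convex for large s, and ℱ'/g' → 1, ℱ''/g'' → 1. -/
theorem stmt_18 (g : ℝ → ℝ) (s₀ q ε C₀ : ℝ) (hq : 1 ≤ q)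
    (hε0 : 0 < ε) (hε1 : ε < 1)
    (hC5 : ContDiffOn ℝ 5 g (Ioi s₀))
    (hgpos : ∀ s ∈ Ioi s₀, 0 < g s)
    (hg' : ∀ s ∈ Ioi s₀, 0 < deriv g s)
    (hg'' : ∀ s ∈ Ioi s₀, 0 < deriv (deriv g) s)
    (hginf : Tendsto g atTop atTop)
    (hlim : Tendsto (fun s => g s * deriv (deriv g) s / (deriv g s) ^ 2)
      atTop (nhds (1 / q)))
    (hG2 : ∀ k ∈ ({1, 2} : Finset ℕ), ∀ s ∈ Ioi s₀,
      |iteratedDeriv k (fun u => g u * deriv (deriv g) u / (deriv g u) ^ 2) s|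
        ≤ C₀ * (deriv g s / g s) ^ k) :
    ∃ C₁ > (0 : ℝ), ∀ C ≥ C₁,
      ∃ s₁ : ℝ,
        MonotoneOn (fun s => g s + 2 * Real.log (g s)
            - Real.log (g s / deriv g s)
            - Real.log (4 * (g s * deriv (deriv g) s / (deriv g s) ^ 2))
            - C / g s ^ (1 - ε)) (Ici s₁) ∧
        ConvexOn ℝ (Ici s₁) (fun s => g s + 2 * Real.log (g s)
            - Real.log (g s / deriv g s)
            - Real.log (4 * (g s * deriv (deriv g) s / (deriv g s) ^ 2))
            - C / g s ^ (1 - ε)) ∧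
        Tendsto (fun s =>
            deriv (fun u => g u + 2 * Real.log (g u)
              - Real.log (g u / deriv g u)
              - Real.log (4 * (g u * deriv (deriv g) u / (deriv g u) ^ 2))
              - C / g u ^ (1 - ε)) s / deriv g s) atTop (nhds 1) ∧
        Tendsto (fun s =>
            deriv (deriv (fun u => g u + 2 * Real.log (g u)
              - Real.log (g u / deriv g u)
              - Real.log (4 * (g u * deriv (deriv g) u / (deriv g u) ^ 2))
              - C / g u ^ (1 - ε))) s / deriv (deriv g) s) atTop (nhds 1) :=
  stmt_18_general g s₀ q ε C₀ hq hε1 hC5 hgpos hg' hg'' hginf hlim hG2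
end
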